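/- arXiv:math/0505204 — 9 statements merged into one kernel-verified Lean document; each statement's English description precedes it below -/
import Mathlib

section
/- Let P, Q ∈ Γ_n and let r, R satisfy 0 < r ≤ p_i/q_i ≤ R < ∞ for all i, with r ≠ R. Then 0 ≤ Φ_s(P||Q) ≤ A_{Φ_s}(r,R), where A_{Φ_s}(r,R) = (1/4)(R−r)²·(R^{s−1} − r^{s−1})/((R−r)(s−1)) if s ≠ 1, and A_{Φ_1}(r,R) = (1/4)(R−r)²·(ln R − ln r)/(R−r). -/
open Real


section AuxLemmas

/-- MVT sandwich: for `g` with derivative `g'` monotone on `[r,R]`,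
`g' a * (b-a) ≤ g b - g a ≤ g' b * (b-a)` for `a ≤ b` in `[r,R]`. -/
lemma mvt_both {g g' : ℝ → ℝ} {r R : ℝ}
    (hd : ∀ x ∈ Set.Icc r R, HasDerivAt g (g' x) x)
    (hmono : ∀ x ∈ Set.Icc r R, ∀ y ∈ Set.Icc r R, x ≤ y → g' x ≤ g' y)
    {a b : ℝ} (ha : a ∈ Set.Icc r R) (hb : b ∈ Set.Icc r R) (hab : a ≤ b) :
    g' a * (b - a) ≤ g b - g a ∧ g b - g a ≤ g' b * (b - a) := by
  rcases eq_or_lt_of_le hab with h | h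
  · subst h; simp
  · have hsub : Set.Icc a b ⊆ Set.Icc r R := Set.Icc_subset_Icc ha.1 hb.2
    have hcont : ContinuousOn g (Set.Icc a b) := fun x hx =>
      (hd x (hsub hx)).continuousAt.continuousWithinAt
    obtain ⟨c, hc, hceq⟩ := exists_hasDerivAt_eq_slope g g' h hcont
      (fun x hx => hd x (hsub (Set.Ioo_subset_Icc_self hx)))
    have hcmem : c ∈ Set.Icc r R := hsub (Set.Ioo_subset_Icc_self hc)
    have h1 : g' a ≤ g' c := hmono a ha c hcmem hc.1.le
    have h2 : g' c ≤ g' b := hmono c hcmem b hb hc.2.le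
    have hba : (0:ℝ) < b - a := sub_pos.mpr h
    have h3 : g b - g a = g' c * (b - a) := by
      rw [hceq]; field_simp
    constructor <;> nlinarith

/-- Key bound for f-divergence-like sums. -/
lemma key_bound {n : ℕ} (g g' : ℝ → ℝ) {r R : ℝ} (hr : 0 < r) (hrR : r < R)
    (h1l : r ≤ 1) (h1u : 1 ≤ R)
    (hd : ∀ x ∈ Set.Icc r R, HasDerivAt g (g' x) x)
    (hmono : ∀ x ∈ Set.Icc r R, ∀ y ∈ Set.Icc r R, x ≤ y → g' x ≤ g' y)
    (hg1 : g 1 = 0) (hg'1 : g' 1 = 0)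
    (p q : Fin n → ℝ) (hq : ∀ i, 0 < q i)
    (hp1 : ∑ i, p i = 1) (hq1 : ∑ i, q i = 1)
    (hlow : ∀ i, r ≤ p i / q i) (hupp : ∀ i, p i / q i ≤ R) :
    0 ≤ ∑ i, q i * g (p i / q i) ∧
      ∑ i, q i * g (p i / q i) ≤ (1/4) * (R - r) * (g' R - g' r) := by
  have h1mem : (1:ℝ) ∈ Set.Icc r R := ⟨h1l, h1u⟩
  have hrmem : r ∈ Set.Icc r R := ⟨le_refl r, hrR.le⟩
  have hRmem : R ∈ Set.Icc r R := ⟨hrR.le, le_refl R⟩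
  have hRr : (0:ℝ) < R - r := sub_pos.mpr hrR
  have hnn : ∀ x ∈ Set.Icc r R, 0 ≤ g x := by
    intro x hx
    rcases le_total x 1 with h | h
    · have := (mvt_both hd hmono hx h1mem h).2
      rw [hg1, hg'1] at this; linarith
    · have := (mvt_both hd hmono h1mem hx h).1
      rw [hg1, hg'1] at this; linarith
  have hchord : ∀ x ∈ Set.Icc r R, g x * (R - r) ≤ (R - x) * g r + (x - r) * g R := by
    intro x hx
    have t1 := (mvt_both hd hmono hrmem hx hx.1).2
    have t2 := (mvt_both hd hmono hx hRmem hx.2).1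
    nlinarith [mul_le_mul_of_nonneg_right t1 (sub_nonneg.mpr hx.2),
      mul_le_mul_of_nonneg_right t2 (sub_nonneg.mpr hx.1)]
  have hqu : ∀ i, q i * (p i / q i) = p i := fun i => by
    rw [mul_comm]; exact div_mul_cancel₀ (p i) (hq i).ne'
  constructor
  · exact Finset.sum_nonneg fun i _ =>
      mul_nonneg (hq i).le (hnn _ ⟨hlow i, hupp i⟩)
  · -- upper bound
    have hsum_le : (∑ i, q i * g (p i / q i)) * (R - r) ≤ (R - 1) * g r + (1 - r) * g R := by
      have step : ∀ i, q i * g (p i / q i) * (R - r) ≤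
          (q i * R - p i) * g r + (p i - q i * r) * g R := by
        intro i
        have hc := hchord _ ⟨hlow i, hupp i⟩
        have this1 := mul_le_mul_of_nonneg_left hc (hq i).le
        have h2 : q i * ((R - p i / q i) * g r + (p i / q i - r) * g R)
            = (q i * R - q i * (p i / q i)) * g r + (q i * (p i / q i) - q i * r) * g R := by
          ring
        rw [hqu i] at h2
        have h3 : q i * g (p i / q i) * (R - r) = q i * (g (p i / q i) * (R - r)) := by ring
        rw [h2] at this1
        linarith
      calc (∑ i, q i * g (p i / q i)) * (R - r)
          = ∑ i, q i * g (p i / q i) * (R - r) := Finset.sum_mul ..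
        _ ≤ ∑ i, ((q i * R - p i) * g r + (p i - q i * r) * g R) :=
            Finset.sum_le_sum fun i _ => step i
        _ = (R - 1) * g r + (1 - r) * g R := by
            simp only [Finset.sum_add_distrib, Finset.sum_sub_distrib, ← Finset.sum_mul,
              hp1, hq1]
            ring
    have t_r : g r ≤ g' r * (r - 1) := by
      have := (mvt_both hd hmono hrmem h1mem h1l).1
      rw [hg1] at this; nlinarith
    have t_R : g R ≤ g' R * (R - 1) := by
      have := (mvt_both hd hmono h1mem hRmem h1u).2
      rw [hg1] at this; linarith
    have hmrR : g' r ≤ g' R := hmono r hrmem R hRmem hrR.le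
    have step1 : (∑ i, q i * g (p i / q i)) * (R - r) ≤ (R - 1) * (1 - r) * (g' R - g' r) := by
      nlinarith [mul_le_mul_of_nonneg_left t_r (sub_nonneg.mpr h1u),
        mul_le_mul_of_nonneg_left t_R (sub_nonneg.mpr h1l)]
    have step2 : (R - 1) * (1 - r) * (g' R - g' r) ≤ (1/4) * (R - r)^2 * (g' R - g' r) := by
      have h2 : (R - 1) * (1 - r) ≤ (1/4) * (R - r)^2 := by nlinarith [sq_nonneg (R + r - 2)]
      exact mul_le_mul_of_nonneg_right h2 (sub_nonneg.mpr hmrR)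
    have : (∑ i, q i * g (p i / q i)) * (R - r) ≤ ((1/4) * (R - r) * (g' R - g' r)) * (R - r) := by
      nlinarith
    exact le_of_mul_le_mul_right this hRr

end AuxLemmas

/-- Relative information of type `s` (Cressie–Read generalization of Kullback–Leibler). -/
noncomputable def Phi {n : ℕ} (s : ℝ) (p q : Fin n → ℝ) : ℝ :=
  if s = 0 then ∑ i, q i * Real.log (q i / p i)
  else if s = 1 then ∑ i, p i * Real.log (p i / q i)
  else (s * (s - 1))⁻¹ * ((∑ i, p i ^ s * q i ^ (1 - s)) - 1)

/-- Kullback–Leibler relative information `K(P‖Q)`. -/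
noncomputable def KL {n : ℕ} (p q : Fin n → ℝ) : ℝ :=
  ∑ i, p i * Real.log (p i / q i)

/-- Relative J-divergence `D(P‖Q)`. -/
noncomputable def relJ {n : ℕ} (p q : Fin n → ℝ) : ℝ :=
  ∑ i, (p i - q i) * Real.log ((p i + q i) / (2 * q i))

/-- Relative JS-divergence `F(P‖Q)`. -/
noncomputable def relJS {n : ℕ} (p q : Fin n → ℝ) : ℝ :=
  ∑ i, p i * Real.log (2 * p i / (p i + q i))

/-- Relative AG-divergence `G(P‖Q)`. -/
noncomputable def relAG {n : ℕ} (p q : Fin n → ℝ) : ℝ :=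
  ∑ i, ((p i + q i) / 2) * Real.log ((p i + q i) / (2 * p i))

/-- J-divergence `J(P‖Q)`. -/
noncomputable def Jdiv {n : ℕ} (p q : Fin n → ℝ) : ℝ :=
  ∑ i, (p i - q i) * Real.log (p i / q i)

/-- JS-divergence (information radius) `I(P‖Q)`. -/
noncomputable def JSdiv {n : ℕ} (p q : Fin n → ℝ) : ℝ :=
  (relJS p q + relJS q p) / 2

/-- AG-divergence `T(P‖Q)`. -/
noncomputable def AGdiv {n : ℕ} (p q : Fin n → ℝ) : ℝ :=
  (relAG p q + relAG q p) / 2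

/-- Hellinger discrimination `h(P‖Q)`. -/
noncomputable def hell {n : ℕ} (p q : Fin n → ℝ) : ℝ :=
  (1 / 2) * ∑ i, (Real.sqrt (p i) - Real.sqrt (q i)) ^ 2

theorem stmt0 {n : ℕ} (hn : 2 ≤ n) (p q : Fin n → ℝ)
    (hp : ∀ i, 0 < p i) (hq : ∀ i, 0 < q i)
    (hp1 : ∑ i, p i = 1) (hq1 : ∑ i, q i = 1)
    (r R : ℝ) (hr : 0 < r)
    (hlow : ∀ i, r ≤ p i / q i) (hupp : ∀ i, p i / q i ≤ R) (hrR : r ≠ R) (s : ℝ) :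
    0 ≤ Phi s p q ∧
      Phi s p q ≤
        (if s = 1 then (1 / 4) * (R - r) ^ 2 * ((Real.log R - Real.log r) / (R - r))
         else (1 / 4) * (R - r) ^ 2 * ((R ^ (s - 1) - r ^ (s - 1)) / ((R - r) * (s - 1)))) := by
  -- shared facts
  classical
  have hriq : ∀ i, r * q i ≤ p i := fun i => (le_div_iff₀ (hq i)).mp (hlow i)
  have hRiq : ∀ i, p i ≤ R * q i := fun i => (div_le_iff₀ (hq i)).mp (hupp i)
  have h1l : r ≤ 1 := by
    have : ∑ i, r * q i ≤ ∑ i, p i := Finset.sum_le_sum fun i _ => hriq i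
    rwa [← Finset.mul_sum, hq1, mul_one, hp1] at this
  have h1u : (1:ℝ) ≤ R := by
    have : ∑ i, p i ≤ ∑ i, R * q i := Finset.sum_le_sum fun i _ => hRiq i
    rwa [← Finset.mul_sum, hq1, mul_one, hp1] at this
  have hrR' : r < R := lt_of_le_of_ne (h1l.trans h1u) hrR
  have hRrne : R - r ≠ 0 := sub_ne_zero.mpr (Ne.symm hrR)
  have hRpos : (0:ℝ) < R := lt_of_lt_of_le one_pos h1u
  by_cases hs0 : s = 0
  · -- case s = 0 : g x = x - 1 - log x
    subst hs0
    set g : ℝ → ℝ := fun x => x - 1 - Real.log x with hg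
    set g' : ℝ → ℝ := fun x => 1 - x⁻¹ with hg'
    have hd : ∀ x ∈ Set.Icc r R, HasDerivAt g (g' x) x := by
      intro x hx
      have hx0 : (0:ℝ) < x := lt_of_lt_of_le hr hx.1
      exact ((hasDerivAt_id x).sub_const 1).sub (Real.hasDerivAt_log hx0.ne')
    have hmono : ∀ x ∈ Set.Icc r R, ∀ y ∈ Set.Icc r R, x ≤ y → g' x ≤ g' y := by
      intro x hx y hy hxy
      have hx0 : (0:ℝ) < x := lt_of_lt_of_le hr hx.1
      have : y⁻¹ ≤ x⁻¹ := inv_anti₀ hx0 hxy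
      simp only [hg']
      linarith
    have hg1 : g 1 = 0 := by simp [hg]
    have hg'1 : g' 1 = 0 := by simp [hg']
    obtain ⟨hlo, hup⟩ := key_bound g g' hr hrR' h1l h1u hd hmono hg1 hg'1 p q hq hp1 hq1 hlow hupp
    have hPhi : Phi 0 p q = ∑ i, q i * g (p i / q i) := by
      have term : ∀ i, q i * g (p i / q i) = q i * Real.log (q i / p i) + (p i - q i) := by
        intro i
        have hpi := (hp i).ne'
        have hqi := (hq i).ne'
        have hlg : Real.log (p i / q i) = - Real.log (q i / p i) := by
          rw [← Real.log_inv, inv_div]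
        have hq' : q i * (p i / q i) = p i := by
          rw [mul_comm]; exact div_mul_cancel₀ (p i) hqi
        simp only [hg]
        rw [hlg]
        linear_combination hq'
      rw [Finset.sum_congr rfl (fun i _ => term i), Finset.sum_add_distrib,
        Finset.sum_sub_distrib, hp1, hq1]
      simp [Phi]
    have hb : (if (0:ℝ) = 1 then (1 / 4) * (R - r) ^ 2 * ((Real.log R - Real.log r) / (R - r))
         else (1 / 4) * (R - r) ^ 2 * ((R ^ ((0:ℝ) - 1) - r ^ ((0:ℝ) - 1)) / ((R - r) * ((0:ℝ) - 1))))
        = (1/4) * (R - r) * (g' R - g' r) := by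
      rw [if_neg (by norm_num)]
      have e1 : R ^ ((0:ℝ) - 1) = R⁻¹ := by
        rw [show (0:ℝ) - 1 = -1 by norm_num, Real.rpow_neg_one]
      have e2 : r ^ ((0:ℝ) - 1) = r⁻¹ := by
        rw [show (0:ℝ) - 1 = -1 by norm_num, Real.rpow_neg_one]
      rw [e1, e2]
      simp only [hg']
      have key : (R⁻¹ - r⁻¹) / ((R - r) * ((0:ℝ) - 1)) = (r⁻¹ - R⁻¹) / (R - r) := by
        rw [show (0:ℝ) - 1 = -1 by norm_num, mul_neg_one, div_neg]
        ring
      rw [key]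
      have expand : (r⁻¹ - R⁻¹) / (R - r) * (R - r) = r⁻¹ - R⁻¹ := div_mul_cancel₀ _ hRrne
      linear_combination (1/4*(R-r)) * expand
    rw [hPhi, hb]
    exact ⟨hlo, hup⟩
  · by_cases hs1 : s = 1
    · -- case s = 1 : g x = x log x - x + 1
      subst hs1
      set g : ℝ → ℝ := fun x => x * Real.log x - x + 1 with hg
      set g' : ℝ → ℝ := fun x => Real.log x with hg'
      have hd : ∀ x ∈ Set.Icc r R, HasDerivAt g (g' x) x := by
        intro x hx
        have hx0 : (0:ℝ) < x := lt_of_lt_of_le hr hx.1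
        have h1 : HasDerivAt (fun y : ℝ => y * Real.log y) (1 * Real.log x + x * x⁻¹) x :=
          (hasDerivAt_id x).mul (Real.hasDerivAt_log hx0.ne')
        have h2 := (h1.sub (hasDerivAt_id x)).add_const 1
        have : (1 * Real.log x + x * x⁻¹) - 1 = Real.log x := by
          field_simp
          ring
        rw [this] at h2
        exact h2
      have hmono : ∀ x ∈ Set.Icc r R, ∀ y ∈ Set.Icc r R, x ≤ y → g' x ≤ g' y := by
        intro x hx y hy hxy
        exact Real.log_le_log (lt_of_lt_of_le hr hx.1) hxy
      have hg1 : g 1 = 0 := by simp [hg]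
      have hg'1 : g' 1 = 0 := by simp [hg']
      obtain ⟨hlo, hup⟩ := key_bound g g' hr hrR' h1l h1u hd hmono hg1 hg'1 p q hq hp1 hq1 hlow hupp
      have hPhi : Phi 1 p q = ∑ i, q i * g (p i / q i) := by
        have term : ∀ i, q i * g (p i / q i) = p i * Real.log (p i / q i) + (q i - p i) := by
          intro i
          have hqi := (hq i).ne'
          have hq' : q i * (p i / q i) = p i := by
            rw [mul_comm]; exact div_mul_cancel₀ (p i) hqi
          simp only [hg]
          linear_combination (Real.log (p i / q i) - 1) * hq'
        rw [Finset.sum_congr rfl (fun i _ => term i), Finset.sum_add_distrib,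
          Finset.sum_sub_distrib, hp1, hq1]
        simp [Phi]
      have hb : (if (1:ℝ) = 1 then (1 / 4) * (R - r) ^ 2 * ((Real.log R - Real.log r) / (R - r))
           else (1 / 4) * (R - r) ^ 2 * ((R ^ ((1:ℝ) - 1) - r ^ ((1:ℝ) - 1)) / ((R - r) * ((1:ℝ) - 1))))
          = (1/4) * (R - r) * (g' R - g' r) := by
        rw [if_pos rfl]
        simp only [hg']
        have expand : (Real.log R - Real.log r) / (R - r) * (R - r) = Real.log R - Real.log r :=
          div_mul_cancel₀ _ hRrne
        linear_combination (1/4*(R-r)) * expand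
      rw [hPhi, hb]
      exact ⟨hlo, hup⟩
    · -- case s ≠ 0, 1
      have hs1' : s - 1 ≠ 0 := sub_ne_zero.mpr hs1
      set c : ℝ := (s * (s - 1))⁻¹ with hc
      set g : ℝ → ℝ := fun x => c * (x ^ s - 1 - s * (x - 1)) with hg
      set g' : ℝ → ℝ := fun x => c * (s * x ^ (s - 1) - s) with hg'
      have hd : ∀ x ∈ Set.Icc r R, HasDerivAt g (g' x) x := by
        intro x hx
        have hx0 : (0:ℝ) < x := lt_of_lt_of_le hr hx.1
        have h1 : HasDerivAt (fun y : ℝ => y ^ s) (s * x ^ (s - 1)) x :=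
          Real.hasDerivAt_rpow_const (Or.inl hx0.ne')
        have h2 : HasDerivAt (fun y : ℝ => s * (y - 1)) s x := by
          simpa using ((hasDerivAt_id x).sub_const 1).const_mul s
        exact (((h1.sub_const 1).sub h2).const_mul c)
      have hkey : ∀ a : ℝ, c * (s * a - s) = (s - 1)⁻¹ * (a - 1) := by
        intro a
        rw [hc]
        field_simp
      have hmono : ∀ x ∈ Set.Icc r R, ∀ y ∈ Set.Icc r R, x ≤ y → g' x ≤ g' y := by
        intro x hx y hy hxy
        have hx0 : (0:ℝ) < x := lt_of_lt_of_le hr hx.1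
        simp only [hg']
        rw [hkey, hkey]
        rcases lt_or_gt_of_ne hs1 with h | h
        · have hle : y ^ (s - 1) ≤ x ^ (s - 1) :=
            Real.rpow_le_rpow_of_nonpos hx0 hxy (by linarith)
          have hinv : (s - 1)⁻¹ < 0 := inv_lt_zero.mpr (by linarith)
          nlinarith
        · have hle : x ^ (s - 1) ≤ y ^ (s - 1) :=
            Real.rpow_le_rpow hx0.le hxy (by linarith)
          have hinv : (0:ℝ) < (s - 1)⁻¹ := inv_pos.mpr (by linarith)
          nlinarith
      have hg1 : g 1 = 0 := by simp [hg, Real.one_rpow]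
      have hg'1 : g' 1 = 0 := by simp [hg', Real.one_rpow]
      obtain ⟨hlo, hup⟩ := key_bound g g' hr hrR' h1l h1u hd hmono hg1 hg'1 p q hq hp1 hq1 hlow hupp
      have hPhi : Phi s p q = ∑ i, q i * g (p i / q i) := by
        have term : ∀ i, q i * g (p i / q i)
            = c * (p i ^ s * q i ^ (1 - s) - q i - s * (p i - q i)) := by
          intro i
          have hpi := hp i
          have hqi := hq i
          have hqs : (0:ℝ) < q i ^ s := Real.rpow_pos_of_pos hqi s
          have e2 : (p i / q i) ^ s = p i ^ s / q i ^ s := Real.div_rpow hpi.le hqi.le s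
          have e1 : q i ^ (1 - s) = q i / q i ^ s := by
            rw [Real.rpow_sub hqi, Real.rpow_one]
          have hq' : q i * (p i / q i) = p i := by
            rw [mul_comm]; exact div_mul_cancel₀ (p i) hqi.ne'
          simp only [hg]
          rw [e2, e1]
          field_simp
        rw [Finset.sum_congr rfl (fun i _ => term i)]
        rw [show (Phi s p q) = c * ((∑ i, p i ^ s * q i ^ (1 - s)) - 1) by
          simp [Phi, hs0, hs1, hc]]
        rw [← Finset.mul_sum]
        congr 1
        simp only [Finset.sum_sub_distrib, ← Finset.mul_sum, hp1, hq1]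
        ring
      have hb : (if s = 1 then (1 / 4) * (R - r) ^ 2 * ((Real.log R - Real.log r) / (R - r))
           else (1 / 4) * (R - r) ^ 2 * ((R ^ (s - 1) - r ^ (s - 1)) / ((R - r) * (s - 1))))
          = (1/4) * (R - r) * (g' R - g' r) := by
        rw [if_neg hs1]
        simp only [hg']
        rw [hkey, hkey]
        field_simp
        ring
      rw [hPhi, hb]
      exact ⟨hlo, hup⟩
end

section
/- Let P, Q ∈ Γ_n and let r, R satisfy 0 < r ≤ p_i/q_i ≤ R < ∞ for all i. Let s ∈ ℝ and let f : (0,∞) → ℝ be twice differentiable with f(1) = 0, and suppose there are constants 0 < m ≤ M such that m ≤ x^{2−s} f''(x) ≤ M for all x ∈ [r,R]. Then m·Φ_s(P||Q) ≤ C_f(P||Q) ≤ M·Φ_s(P||Q), where C_f(P||Q) = Σ_{i=1}^n q_i f(p_i/q_i) is the Csiszár f-divergence. -/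
open Real

noncomputable def phiAux (s : ℝ) (x : ℝ) : ℝ :=
  if s = 0 then x - 1 - Real.log x
  else if s = 1 then x * Real.log x - x + 1
  else (s * (s - 1))⁻¹ * (x ^ s - 1 - s * (x - 1))

noncomputable def phiAux' (s : ℝ) (x : ℝ) : ℝ :=
  if s = 0 then 1 - x⁻¹
  else if s = 1 then Real.log x
  else (s * (s - 1))⁻¹ * (s * x ^ (s - 1) - s)

lemma phiAux_one (s : ℝ) : phiAux s 1 = 0 := by
  unfold phiAux; split_ifs <;> simp

lemma hasDerivAt_phiAux (s : ℝ) {x : ℝ} (hx : 0 < x) :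
    HasDerivAt (phiAux s) (phiAux' s x) x := by
  unfold phiAux phiAux'
  split_ifs with h0 h1
  · exact ((hasDerivAt_id' x).sub_const 1).sub (Real.hasDerivAt_log hx.ne')
  · have h := ((hasDerivAt_id x).mul (Real.hasDerivAt_log hx.ne')).sub (hasDerivAt_id x)
    have h2 := h.add_const 1
    simpa [mul_inv_cancel₀ hx.ne'] using h2
  · have h := (Real.hasDerivAt_rpow_const (p := s) (Or.inl hx.ne')).sub_const 1
    have h2 := h.sub (((hasDerivAt_id x).sub_const 1).const_mul s)
    simpa [mul_comm] using h2.const_mul ((s * (s - 1))⁻¹)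

lemma hasDerivAt_phiAux' (s : ℝ) {x : ℝ} (hx : 0 < x) :
    HasDerivAt (phiAux' s) (x ^ (s - 2)) x := by
  unfold phiAux'
  split_ifs with h0 h1
  · have h := (hasDerivAt_inv hx.ne').const_sub 1
    have : x ^ (s - 2) = (x ^ 2)⁻¹ := by
      rw [h0]; rw [show (0 : ℝ) - 2 = -(2 : ℝ) by ring, Real.rpow_neg hx.le]
      norm_num [Real.rpow_natCast]
    rw [this]; simpa using h
  · have : x ^ (s - 2) = x⁻¹ := by
      rw [h1, show (1 : ℝ) - 2 = -(1 : ℝ) by ring, Real.rpow_neg_one]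
    rw [this]; exact Real.hasDerivAt_log hx.ne'
  · have h := ((Real.hasDerivAt_rpow_const (p := s - 1) (Or.inl hx.ne')).const_mul s).sub_const s
    have h2 := h.const_mul ((s * (s - 1))⁻¹)
    have hs : s * (s - 1) ≠ 0 := by
      apply mul_ne_zero h0; intro h; apply h1; linarith
    have : (s * (s - 1))⁻¹ * (s * ((s - 1) * x ^ (s - 1 - 1))) = x ^ (s - 2) := by
      rw [show s - 1 - 1 = s - 2 by ring]
      field_simp
    rw [← this]; exact h2

lemma sum_phiAux {n : ℕ} (s : ℝ) (p q : Fin n → ℝ)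
    (hp : ∀ i, 0 < p i) (hq : ∀ i, 0 < q i)
    (hp1 : ∑ i, p i = 1) (hq1 : ∑ i, q i = 1) :
    ∑ i, q i * phiAux s (p i / q i) =
      (if s = 0 then ∑ i, q i * Real.log (q i / p i)
       else if s = 1 then ∑ i, p i * Real.log (p i / q i)
       else (s * (s - 1))⁻¹ * ((∑ i, p i ^ s * q i ^ (1 - s)) - 1)) := by
  unfold phiAux
  split_ifs with h0 h1
  · have key : ∀ i, q i * (p i / q i - 1 - Real.log (p i / q i)) =
        (p i - q i) + q i * Real.log (q i / p i) := by
      intro i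
      have hqi := (hq i).ne'
      have hl : Real.log (p i / q i) = -Real.log (q i / p i) := by
        rw [← Real.log_inv, inv_div]
      rw [hl]; field_simp; ring
    simp only [key, Finset.sum_add_distrib, Finset.sum_sub_distrib, hp1, hq1]
    ring
  · have key : ∀ i, q i * (p i / q i * Real.log (p i / q i) - p i / q i + 1) =
        p i * Real.log (p i / q i) - p i + q i := by
      intro i
      have hqi := (hq i).ne'
      field_simp
    simp only [key, Finset.sum_add_distrib, Finset.sum_sub_distrib, hp1, hq1]
    ring
  · have key : ∀ i, q i * ((s * (s - 1))⁻¹ * ((p i / q i) ^ s - 1 - s * (p i / q i - 1))) =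
        (s * (s - 1))⁻¹ * (p i ^ s * q i ^ (1 - s) - q i - s * (p i - q i)) := by
      intro i
      have h1 : (p i / q i) ^ s = p i ^ s / q i ^ s :=
        Real.div_rpow (hp i).le (hq i).le s
      have h2 : q i ^ (1 - s) = q i / q i ^ s := by
        rw [Real.rpow_sub (hq i), Real.rpow_one]
      have h3 : (0:ℝ) < q i ^ s := Real.rpow_pos_of_pos (hq i) s
      have hqi := (hq i).ne'
      rw [mul_left_comm]
      congr 1
      rw [h1, h2]
      field_simp
    rw [Finset.sum_congr rfl fun i _ => key i, ← Finset.mul_sum]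
    congr 1
    rw [Finset.sum_sub_distrib, Finset.sum_sub_distrib, ← Finset.mul_sum,
      Finset.sum_sub_distrib, hp1, hq1]
    ring

lemma jensen_aux {n : ℕ} (p q : Fin n → ℝ)
    (hp : ∀ i, 0 < p i) (hq : ∀ i, 0 < q i)
    (hp1 : ∑ i, p i = 1) (hq1 : ∑ i, q i = 1)
    (r R : ℝ) (hr : 0 < r)
    (hlow : ∀ i, r ≤ p i / q i) (hupp : ∀ i, p i / q i ≤ R)
    (g g' g'' : ℝ → ℝ) (hg1 : g 1 = 0)
    (hd1 : ∀ x ∈ Set.Ioi (0:ℝ), HasDerivAt g (g' x) x)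
    (hd2 : ∀ x ∈ Set.Ioi (0:ℝ), HasDerivAt g' (g'' x) x)
    (hpos : ∀ x ∈ Set.Ioo r R, 0 ≤ g'' x) :
    0 ≤ ∑ i, q i * g (p i / q i) := by
  have hsub : Set.Icc r R ⊆ Set.Ioi (0:ℝ) := fun x hx => lt_of_lt_of_le hr hx.1
  have hconv : ConvexOn ℝ (Set.Icc r R) g := by
    apply convexOn_of_hasDerivWithinAt2_nonneg (convex_Icc r R)
      (fun x hx => (hd1 x (hsub hx)).continuousAt.continuousWithinAt)
      (f' := g') (f'' := g'')
    · intro x hx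
      rw [interior_Icc] at hx
      exact (hd1 x (hsub (Set.Ioo_subset_Icc_self hx))).hasDerivWithinAt
    · intro x hx
      rw [interior_Icc] at hx
      exact (hd2 x (hsub (Set.Ioo_subset_Icc_self hx))).hasDerivWithinAt
    · intro x hx
      rw [interior_Icc] at hx
      exact hpos x hx
  have key := hconv.map_sum_le (t := Finset.univ) (w := q) (p := fun i => p i / q i)
    (fun i _ => (hq i).le) hq1 (fun i _ => ⟨hlow i, hupp i⟩)
  have hsum : ∑ i, q i • (p i / q i) = 1 := by
    rw [← hp1]
    exact Finset.sum_congr rfl fun i _ => by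
      rw [smul_eq_mul, mul_div_cancel₀ _ (hq i).ne']
  rw [hsum, hg1] at key
  simpa [smul_eq_mul] using key

theorem stmt1 {n : ℕ} (hn : 2 ≤ n) (p q : Fin n → ℝ)
    (hp : ∀ i, 0 < p i) (hq : ∀ i, 0 < q i)
    (hp1 : ∑ i, p i = 1) (hq1 : ∑ i, q i = 1)
    (r R : ℝ) (hr : 0 < r)
    (hlow : ∀ i, r ≤ p i / q i) (hupp : ∀ i, p i / q i ≤ R) (s : ℝ) (f : ℝ → ℝ) (hf1 : f 1 = 0)
    (hdiff : ∀ x ∈ Set.Ioi (0 : ℝ), DifferentiableAt ℝ f x ∧ DifferentiableAt ℝ (deriv f) x)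
    (m M : ℝ) (hm : 0 < m) (hmM : m ≤ M)
    (hbound : ∀ x ∈ Set.Icc r R,
      m ≤ x ^ (2 - s) * deriv (deriv f) x ∧ x ^ (2 - s) * deriv (deriv f) x ≤ M) :
    m * Phi s p q ≤ ∑ i, q i * f (p i / q i) ∧
      (∑ i, q i * f (p i / q i)) ≤ M * Phi s p q := by
  have hPhi : ∑ i, q i * phiAux s (p i / q i) = Phi s p q := by
    rw [sum_phiAux s p q hp hq hp1 hq1]; rfl
  have hrp : ∀ x : ℝ, x ∈ Set.Ioo r R → 0 < x := fun x hx => lt_trans hr hx.1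
  have hinvmul : ∀ x : ℝ, 0 < x → x ^ (s - 2) * x ^ (2 - s) = 1 := by
    intro x hx
    rw [← Real.rpow_add hx]
    norm_num
  have hrpow_pos : ∀ x : ℝ, 0 < x → (0:ℝ) < x ^ (s - 2) :=
    fun x hx => Real.rpow_pos_of_pos hx _
  constructor
  · -- lower bound: g = f - m • phiAux
    have h0 : 0 ≤ ∑ i, q i * (f (p i / q i) - m * phiAux s (p i / q i)) := by
      apply jensen_aux p q hp hq hp1 hq1 r R hr hlow hupp
        (fun x => f x - m * phiAux s x)
        (fun x => deriv f x - m * phiAux' s x)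
        (fun x => deriv (deriv f) x - m * x ^ (s - 2))
      · rw [hf1, phiAux_one]; ring
      · intro x hx
        exact ((hdiff x hx).1.hasDerivAt).sub ((hasDerivAt_phiAux s hx).const_mul m)
      · intro x hx
        exact ((hdiff x hx).2.hasDerivAt).sub ((hasDerivAt_phiAux' s hx).const_mul m)
      · intro x hx
        have hx0 := hrp x hx
        have hb := (hbound x (Set.Ioo_subset_Icc_self hx)).1
        have := mul_le_mul_of_nonneg_left hb (hrpow_pos x hx0).le
        rw [← mul_assoc, hinvmul x hx0, one_mul] at this
        nlinarith [hrpow_pos x hx0]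
    have expand : ∑ i, q i * (f (p i / q i) - m * phiAux s (p i / q i)) =
        (∑ i, q i * f (p i / q i)) - m * ∑ i, q i * phiAux s (p i / q i) := by
      rw [Finset.mul_sum, ← Finset.sum_sub_distrib]
      exact Finset.sum_congr rfl fun i _ => by ring
    rw [expand, hPhi] at h0
    linarith
  · -- upper bound: g = M • phiAux - f
    have h0 : 0 ≤ ∑ i, q i * (M * phiAux s (p i / q i) - f (p i / q i)) := by
      apply jensen_aux p q hp hq hp1 hq1 r R hr hlow hupp
        (fun x => M * phiAux s x - f x)
        (fun x => M * phiAux' s x - deriv f x)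
        (fun x => M * x ^ (s - 2) - deriv (deriv f) x)
      · rw [hf1, phiAux_one]; ring
      · intro x hx
        exact ((hasDerivAt_phiAux s hx).const_mul M).sub (hdiff x hx).1.hasDerivAt
      · intro x hx
        exact ((hasDerivAt_phiAux' s hx).const_mul M).sub (hdiff x hx).2.hasDerivAt
      · intro x hx
        have hx0 := hrp x hx
        have hb := (hbound x (Set.Ioo_subset_Icc_self hx)).2
        have := mul_le_mul_of_nonneg_left hb (hrpow_pos x hx0).le
        rw [← mul_assoc, hinvmul x hx0, one_mul] at this
        nlinarith [hrpow_pos x hx0]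
    have expand : ∑ i, q i * (M * phiAux s (p i / q i) - f (p i / q i)) =
        M * (∑ i, q i * phiAux s (p i / q i)) - ∑ i, q i * f (p i / q i) := by
      rw [Finset.mul_sum, ← Finset.sum_sub_distrib]
      exact Finset.sum_congr rfl fun i _ => by ring
    rw [expand, hPhi] at h0
    linarith
end

section
/- Let P, Q ∈ Γ_n and let r, R satisfy 0 < r ≤ p_i/q_i ≤ R < ∞ for all i. If s ≤ 3/4 then (r^{2−s}(r+3)/(r+1)²)·Φ_s(P||Q) ≤ D(P||Q) ≤ (R^{2−s}(R+3)/(R+1)²)·Φ_s(P||Q), and if s ≥ 2 then (R^{2−s}(R+3)/(R+1)²)·Φ_s(P||Q) ≤ D(P||Q) ≤ (r^{2−s}(r+3)/(r+1)²)·Φ_s(P||Q). -/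
open Real

open Real Set

noncomputable def ff (t : ℝ) : ℝ := (t - 1) * Real.log ((t + 1) / 2)
noncomputable def ff' (t : ℝ) : ℝ := Real.log ((t + 1) / 2) + (t - 1) / (t + 1)
noncomputable def ff'' (t : ℝ) : ℝ := (t + 3) / (t + 1) ^ 2

noncomputable def ph (s t : ℝ) : ℝ :=
  if s = 0 then t - 1 - Real.log t else (t ^ s - 1 - s * (t - 1)) / (s * (s - 1))
noncomputable def ph' (s t : ℝ) : ℝ := (t ^ (s - 1) - 1) / (s - 1)
noncomputable def ph'' (s t : ℝ) : ℝ := t ^ (s - 2)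

noncomputable def gg (s t : ℝ) : ℝ := t ^ (2 - s) * (t + 3) / (t + 1) ^ 2
noncomputable def gg' (s t : ℝ) : ℝ :=
  t ^ (1 - s) * ((1 - s) * t ^ 2 + (3 - 4 * s) * t + 3 * (2 - s)) / (t + 1) ^ 3

lemma ff_one : ff 1 = 0 := by simp [ff]
lemma ff'_one : ff' 1 = 0 := by norm_num [ff']
lemma ph_one (s : ℝ) : ph s 1 = 0 := by
  unfold ph; split <;> simp
lemma ph'_one (s : ℝ) : ph' s 1 = 0 := by simp [ph']

lemma ff_deriv (t : ℝ) (ht : 0 < t) : HasDerivAt ff (ff' t) t := by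
  have h1 : HasDerivAt (fun t : ℝ => t - 1) 1 t := (hasDerivAt_id t).sub_const 1
  have hu : HasDerivAt (fun t : ℝ => (t + 1) / 2) (1 / 2) t := by
    simpa using ((hasDerivAt_id t).add_const 1).div_const 2
  have h2 : HasDerivAt (fun t : ℝ => Real.log ((t + 1) / 2)) ((1 / 2) / ((t + 1) / 2)) t :=
    hu.log (by positivity)
  have := h1.mul h2
  refine this.congr_deriv (Eq.symm ?_)
  unfold ff'
  field_simp

lemma ff'_deriv (t : ℝ) (ht : 0 < t) : HasDerivAt ff' (ff'' t) t := by
  have hu : HasDerivAt (fun t : ℝ => (t + 1) / 2) (1 / 2) t := by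
    simpa using ((hasDerivAt_id t).add_const 1).div_const 2
  have h2 : HasDerivAt (fun t : ℝ => Real.log ((t + 1) / 2)) ((1 / 2) / ((t + 1) / 2)) t :=
    hu.log (by positivity)
  have h3 : HasDerivAt (fun t : ℝ => (t - 1) / (t + 1))
      ((1 * (t + 1) - (t - 1) * 1) / (t + 1) ^ 2) t :=
    ((hasDerivAt_id t).sub_const 1).div ((hasDerivAt_id t).add_const 1) (by positivity)
  have := h2.add h3
  refine this.congr_deriv (Eq.symm ?_)
  unfold ff''
  field_simp
  ring

lemma ph_deriv (s : ℝ) (hs : s ≠ 1) (t : ℝ) (ht : 0 < t) : HasDerivAt (ph s) (ph' s t) t := by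
  by_cases h0 : s = 0
  · subst h0
    have hfun : ph 0 = fun t : ℝ => t - 1 - Real.log t := by
      funext x; simp [ph]
    rw [hfun]
    have := ((hasDerivAt_id t).sub_const 1).sub (Real.hasDerivAt_log ht.ne')
    refine this.congr_deriv (Eq.symm ?_)
    unfold ph'
    rw [show (0:ℝ) - 1 = -1 by norm_num, Real.rpow_neg_one, div_neg, div_one]
    ring
  · have hfun : ph s = fun t : ℝ => (t ^ s - 1 - s * (t - 1)) / (s * (s - 1)) := by
      funext x; simp [ph, h0]
    rw [hfun]
    have hd : HasDerivAt (fun t : ℝ => t ^ s - 1 - s * (t - 1))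
        (s * t ^ (s - 1) - s * 1) t :=
      ((Real.hasDerivAt_rpow_const (Or.inl ht.ne')).sub_const 1).sub
        (((hasDerivAt_id t).sub_const 1).const_mul s)
    have := hd.div_const (s * (s - 1))
    refine this.congr_deriv (Eq.symm ?_)
    unfold ph'
    have hs1 : s - 1 ≠ 0 := sub_ne_zero.2 hs
    field_simp

lemma ph'_deriv (s : ℝ) (hs : s ≠ 1) (t : ℝ) (ht : 0 < t) :
    HasDerivAt (ph' s) (ph'' s t) t := by
  have hd : HasDerivAt (fun t : ℝ => t ^ (s - 1) - 1) ((s - 1) * t ^ (s - 1 - 1)) t :=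
    (Real.hasDerivAt_rpow_const (Or.inl ht.ne')).sub_const 1
  have := hd.div_const (s - 1)
  refine this.congr_deriv (Eq.symm ?_)
  unfold ph''
  have hs1 : s - 1 ≠ 0 := sub_ne_zero.2 hs
  rw [show s - 1 - 1 = s - 2 by ring]
  field_simp

lemma gg_deriv (s t : ℝ) (ht : 0 < t) : HasDerivAt (gg s) (gg' s t) t := by
  have hnum : HasDerivAt (fun t : ℝ => t ^ (2 - s) * (t + 3))
      ((2 - s) * t ^ (2 - s - 1) * (t + 3) + t ^ (2 - s) * 1) t :=
    (Real.hasDerivAt_rpow_const (Or.inl ht.ne')).mul ((hasDerivAt_id t).add_const 3)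
  have hden : HasDerivAt (fun t : ℝ => (t + 1) ^ 2) (2 * (t + 1) ^ 1 * 1) t := by
    exact ((hasDerivAt_id t).add_const 1).pow 2
  have := hnum.div hden (by positivity)
  refine this.congr_deriv (Eq.symm ?_)
  unfold gg'
  have h1 : (2 : ℝ) - s - 1 = 1 - s := by ring
  have h2 : t ^ (2 - s) = t * t ^ (1 - s) := by
    rw [show (2:ℝ) - s = 1 + (1 - s) by ring, Real.rpow_add ht, Real.rpow_one]
  rw [h1, h2]
  have hne : (t + 1) ≠ 0 := by positivity
  field_simp
  ring

lemma mvt_aux (F F' : ℝ → ℝ) (a b : ℝ) (ha : 0 < a) (hab : a < b)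
    (hF : ∀ x, 0 < x → HasDerivAt F (F' x) x) :
    ∃ c, a < c ∧ c < b ∧ F' c = (F b - F a) / (b - a) := by
  obtain ⟨c, hc, h⟩ := exists_hasDerivAt_eq_slope F F' hab
    (fun x hx => ((hF x (lt_of_lt_of_le ha hx.1)).continuousAt.continuousWithinAt))
    (fun x hx => hF x (lt_trans ha hx.1))
  exact ⟨c, hc.1, hc.2, h⟩

lemma nonneg_aux (F F' F'' : ℝ → ℝ)
    (hF : ∀ x, 0 < x → HasDerivAt F (F' x) x)
    (hF' : ∀ x, 0 < x → HasDerivAt F' (F'' x) x)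
    (h1 : F 1 = 0) (h1' : F' 1 = 0)
    (a b : ℝ) (ha : 0 < a) (ha1 : a ≤ 1) (hb1 : 1 ≤ b)
    (hsec : ∀ t, a ≤ t → t ≤ b → 0 ≤ F'' t)
    (x : ℝ) (hax : a ≤ x) (hxb : x ≤ b) : 0 ≤ F x := by
  rcases lt_trichotomy x 1 with hx1 | rfl | hx1
  · have hx0 : 0 < x := ha.trans_le hax
    obtain ⟨c, hc1, hc2, hc⟩ := mvt_aux F F' x 1 hx0 hx1 hF
    obtain ⟨d, hd1, hd2, hd⟩ := mvt_aux F' F'' c 1 (hx0.trans hc1) hc2 hF'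
    have hd0 : 0 ≤ F'' d := hsec d (by linarith) (by linarith)
    rw [h1'] at hd
    rw [eq_div_iff (by linarith : (1:ℝ) - c ≠ 0)] at hd
    have hFc : F' c ≤ 0 := by nlinarith
    rw [h1, eq_div_iff (by linarith : (1:ℝ) - x ≠ 0)] at hc
    nlinarith
  · linarith [h1]
  · obtain ⟨c, hc1, hc2, hc⟩ := mvt_aux F F' 1 x one_pos hx1 hF
    obtain ⟨d, hd1, hd2, hd⟩ := mvt_aux F' F'' 1 c one_pos hc1 hF'
    have hd0 : 0 ≤ F'' d := hsec d (by linarith) (by linarith)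
    rw [h1'] at hd
    rw [eq_div_iff (by linarith : c - 1 ≠ 0)] at hd
    have hFc : 0 ≤ F' c := by nlinarith
    rw [h1, eq_div_iff (by linarith : x - 1 ≠ 0)] at hc
    nlinarith

lemma ff2_eq (s t : ℝ) (ht : 0 < t) : ff'' t = gg s t * ph'' s t := by
  have h1 : t ^ (2 - s) * t ^ (s - 2) = 1 := by
    rw [← Real.rpow_add ht]; norm_num
  unfold ff'' gg ph''
  calc (t + 3) / (t + 1) ^ 2 = (t ^ (2 - s) * t ^ (s - 2)) * ((t + 3) / (t + 1) ^ 2) := by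
        rw [h1]; ring
  _ = t ^ (2 - s) * (t + 3) / (t + 1) ^ 2 * t ^ (s - 2) := by ring

lemma pointwise_le (s C a b x : ℝ) (hs : s ≠ 1) (ha : 0 < a) (ha1 : a ≤ 1) (hb1 : 1 ≤ b)
    (hC : ∀ t, a ≤ t → t ≤ b → gg s t ≤ C) (hax : a ≤ x) (hxb : x ≤ b) :
    ff x ≤ C * ph s x := by
  have h := nonneg_aux (fun t => C * ph s t - ff t) (fun t => C * ph' s t - ff' t)
    (fun t => C * ph'' s t - ff'' t)
    (fun t ht => ((ph_deriv s hs t ht).const_mul C).sub (ff_deriv t ht))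
    (fun t ht => ((ph'_deriv s hs t ht).const_mul C).sub (ff'_deriv t ht))
    (by simp [ph_one, ff_one]) (by simp [ph'_one, ff'_one])
    a b ha ha1 hb1
    (fun t h1 h2 => by
      have ht : 0 < t := ha.trans_le h1
      rw [ff2_eq s t ht]
      have hnn : 0 ≤ ph'' s t := Real.rpow_nonneg ht.le _
      have := mul_le_mul_of_nonneg_right (hC t h1 h2) hnn
      linarith)
    x hax hxb
  simpa using h

lemma pointwise_ge (s C a b x : ℝ) (hs : s ≠ 1) (ha : 0 < a) (ha1 : a ≤ 1) (hb1 : 1 ≤ b)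
    (hC : ∀ t, a ≤ t → t ≤ b → C ≤ gg s t) (hax : a ≤ x) (hxb : x ≤ b) :
    C * ph s x ≤ ff x := by
  have h := nonneg_aux (fun t => ff t - C * ph s t) (fun t => ff' t - C * ph' s t)
    (fun t => ff'' t - C * ph'' s t)
    (fun t ht => (ff_deriv t ht).sub ((ph_deriv s hs t ht).const_mul C))
    (fun t ht => (ff'_deriv t ht).sub ((ph'_deriv s hs t ht).const_mul C))
    (by simp [ph_one, ff_one]) (by simp [ph'_one, ff'_one])
    a b ha ha1 hb1
    (fun t h1 h2 => by
      have ht : 0 < t := ha.trans_le h1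
      rw [ff2_eq s t ht]
      have hnn : 0 ≤ ph'' s t := Real.rpow_nonneg ht.le _
      have := mul_le_mul_of_nonneg_right (hC t h1 h2) hnn
      linarith)
    x hax hxb
  simpa using h

lemma gg_mono (s : ℝ) (hs : s ≤ 3 / 4) {a b : ℝ} (ha : 0 < a) (hab : a ≤ b) :
    gg s a ≤ gg s b := by
  rcases eq_or_lt_of_le hab with rfl | h
  · exact le_refl _
  obtain ⟨c, hc1, hc2, hc⟩ := mvt_aux (gg s) (gg' s) a b ha h (fun x hx => gg_deriv s x hx)
  have hc0 : 0 < c := ha.trans hc1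
  have hpos : 0 ≤ gg' s c := by
    unfold gg'
    have h1 : 0 < c ^ (1 - s) := Real.rpow_pos_of_pos hc0 _
    have h2 : 0 ≤ (1 - s) * c ^ 2 + (3 - 4 * s) * c + 3 * (2 - s) := by nlinarith [sq_nonneg c]
    positivity
  rw [hc] at hpos
  rw [le_div_iff₀ (by linarith)] at hpos
  linarith

lemma gg_anti (s : ℝ) (hs : 2 ≤ s) {a b : ℝ} (ha : 0 < a) (hab : a ≤ b) :
    gg s b ≤ gg s a := by
  rcases eq_or_lt_of_le hab with rfl | h
  · exact le_refl _
  obtain ⟨c, hc1, hc2, hc⟩ := mvt_aux (gg s) (gg' s) a b ha h (fun x hx => gg_deriv s x hx)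
  have hc0 : 0 < c := ha.trans hc1
  have hneg : gg' s c ≤ 0 := by
    unfold gg'
    have h1 : 0 ≤ c ^ (1 - s) := Real.rpow_nonneg hc0.le _
    have h2 : (1 - s) * c ^ 2 + (3 - 4 * s) * c + 3 * (2 - s) ≤ 0 := by
      nlinarith [sq_nonneg c, hc0.le]
    have h3 : (0:ℝ) < (c + 1) ^ 3 := by positivity
    have := mul_nonpos_of_nonneg_of_nonpos h1 h2
    exact div_nonpos_of_nonpos_of_nonneg this h3.le
  rw [hc] at hneg
  rw [div_nonpos_iff] at hneg
  rcases hneg with ⟨h1, _⟩ | ⟨h1, h2⟩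
  · nlinarith
  · linarith
lemma relJ_eq {n : ℕ} (p q : Fin n → ℝ) (hp : ∀ i, 0 < p i) (hq : ∀ i, 0 < q i) :
    relJ p q = ∑ i, q i * ff (p i / q i) := by
  unfold relJ ff
  refine Finset.sum_congr rfl fun i _ => ?_
  have hqi := (hq i).ne'
  have harg : (p i / q i + 1) / 2 = (p i + q i) / (2 * q i) := by
    rw [div_add' _ _ _ hqi, one_mul, div_div, mul_comm (q i) 2]
  rw [harg]
  field_simp

lemma phi_eq {n : ℕ} (s : ℝ) (hs : s ≠ 1) (p q : Fin n → ℝ)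
    (hp : ∀ i, 0 < p i) (hq : ∀ i, 0 < q i)
    (hp1 : ∑ i, p i = 1) (hq1 : ∑ i, q i = 1) :
    Phi s p q = ∑ i, q i * ph s (p i / q i) := by
  by_cases h0 : s = 0
  · subst h0
    have hterm : ∀ i, q i * ph 0 (p i / q i)
        = (p i - q i) + q i * Real.log (q i / p i) := by
      intro i
      have hpi := (hp i).ne'
      have hqi := (hq i).ne'
      rw [ph, if_pos rfl]
      rw [Real.log_div hpi hqi, Real.log_div hqi hpi]
      field_simp
      ring
    rw [Finset.sum_congr rfl fun i _ => hterm i, Finset.sum_add_distrib,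
      Finset.sum_sub_distrib, hp1, hq1]
    simp [Phi]
  · have hterm : ∀ i, q i * ph s (p i / q i)
        = (s * (s - 1))⁻¹ * (p i ^ s * q i ^ (1 - s) - q i - s * (p i - q i)) := by
      intro i
      have hpi := (hp i).ne'
      have hqi := (hq i).ne'
      simp only [ph, if_neg h0]
      have h1 : (p i / q i) ^ s = p i ^ s / q i ^ s :=
        Real.div_rpow (hp i).le (hq i).le s
      have h2 : q i ^ (1 - s) = q i / q i ^ s := by
        rw [Real.rpow_sub (hq i), Real.rpow_one]
      have h3 : q i ^ s ≠ 0 := (Real.rpow_pos_of_pos (hq i) s).ne'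
      have hs1 : s - 1 ≠ 0 := sub_ne_zero.2 hs
      rw [h1, h2]
      field_simp [h0, hs1]
    rw [Finset.sum_congr rfl fun i _ => hterm i, ← Finset.mul_sum]
    simp only [Phi, if_neg h0, if_neg hs]
    congr 1
    rw [Finset.sum_sub_distrib, Finset.sum_sub_distrib, ← Finset.mul_sum,
      Finset.sum_sub_distrib, hp1, hq1]
    ring


theorem stmt2 {n : ℕ} (hn : 2 ≤ n) (p q : Fin n → ℝ)
    (hp : ∀ i, 0 < p i) (hq : ∀ i, 0 < q i)
    (hp1 : ∑ i, p i = 1) (hq1 : ∑ i, q i = 1)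
    (r R : ℝ) (hr : 0 < r)
    (hlow : ∀ i, r ≤ p i / q i) (hupp : ∀ i, p i / q i ≤ R) (s : ℝ) :
    (s ≤ 3 / 4 →
      (r ^ (2 - s) * (r + 3) / (r + 1) ^ 2) * Phi s p q ≤ relJ p q ∧
        relJ p q ≤ (R ^ (2 - s) * (R + 3) / (R + 1) ^ 2) * Phi s p q) ∧
    (2 ≤ s →
      (R ^ (2 - s) * (R + 3) / (R + 1) ^ 2) * Phi s p q ≤ relJ p q ∧
        relJ p q ≤ (r ^ (2 - s) * (r + 3) / (r + 1) ^ 2) * Phi s p q) := by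
  have hr1 : r ≤ 1 := by
    have h : ∀ i, r * q i ≤ p i := fun i => by
      have h' := hlow i
      rw [le_div_iff₀ (hq i)] at h'
      linarith
    calc r = ∑ i, r * q i := by rw [← Finset.mul_sum, hq1, mul_one]
    _ ≤ ∑ i, p i := Finset.sum_le_sum fun i _ => h i
    _ = 1 := hp1
  have hR1 : 1 ≤ R := by
    have h : ∀ i, p i ≤ R * q i := fun i => by
      have h' := hupp i
      rw [div_le_iff₀ (hq i)] at h'
      linarith
    calc (1:ℝ) = ∑ i, p i := hp1.symm
    _ ≤ ∑ i, R * q i := Finset.sum_le_sum fun i _ => h i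
    _ = R := by rw [← Finset.mul_sum, hq1, mul_one]
  have hrelJ : relJ p q = ∑ i, q i * ff (p i / q i) := relJ_eq p q hp hq
  have main : ∀ s' m M : ℝ, s' ≠ 1 →
      (∀ t, r ≤ t → t ≤ R → m ≤ gg s' t ∧ gg s' t ≤ M) →
      m * Phi s' p q ≤ relJ p q ∧ relJ p q ≤ M * Phi s' p q := by
    intro s' m M hs1 hmono
    have hPhi : Phi s' p q = ∑ i, q i * ph s' (p i / q i) :=
      phi_eq s' hs1 p q hp hq hp1 hq1
    constructor
    · rw [hPhi, hrelJ, Finset.mul_sum]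
      refine Finset.sum_le_sum fun i _ => ?_
      have key := pointwise_ge s' (m) r R (p i / q i) hs1 hr hr1 hR1
        (fun t h1 h2 => (hmono t h1 h2).1) (hlow i) (hupp i)
      calc m * (q i * ph s' (p i / q i))
          = q i * (m * ph s' (p i / q i)) := by ring
      _ ≤ q i * ff (p i / q i) := mul_le_mul_of_nonneg_left key (hq i).le
    · rw [hPhi, hrelJ, Finset.mul_sum]
      refine Finset.sum_le_sum fun i _ => ?_
      have key := pointwise_le s' (M) r R (p i / q i) hs1 hr hr1 hR1
        (fun t h1 h2 => (hmono t h1 h2).2) (hlow i) (hupp i)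
      calc q i * ff (p i / q i)
          ≤ q i * (M * ph s' (p i / q i)) := mul_le_mul_of_nonneg_left key (hq i).le
      _ = M * (q i * ph s' (p i / q i)) := by ring
  constructor
  · intro hs
    have hs1 : s ≠ 1 := by intro h; rw [h] at hs; norm_num at hs
    exact main s (gg s r) (gg s R) hs1 fun t h1 h2 =>
      ⟨gg_mono s hs hr h1, gg_mono s hs (hr.trans_le h1) h2⟩
  · intro hs
    have hs1 : s ≠ 1 := by intro h; rw [h] at hs; norm_num at hs
    exact main s (gg s R) (gg s r) hs1 fun t h1 h2 =>
      ⟨gg_anti s hs (hr.trans_le h1) h2, gg_anti s hs hr h1⟩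
end

section
/- For all P, Q ∈ Γ_n, D(P||Q) ≤ (9/8)·K(P||Q). -/
open Real

noncomputable def gAux : ℝ → ℝ := fun x => 9/8*(x*Real.log x - x + 1) - (x-1)*Real.log ((x+1)/2)

noncomputable def gAux' : ℝ → ℝ := fun x => 9/8*Real.log x - Real.log ((x+1)/2) - (x-1)/(x+1)

lemma hasDeriv_gAux {x : ℝ} (hx : 0 < x) : HasDerivAt gAux (gAux' x) x := by
  have hx1 : (0:ℝ) < x + 1 := by linarith
  have h1 : HasDerivAt (fun y : ℝ => y * Real.log y - y + 1) (Real.log x) x := by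
    have := ((hasDerivAt_id x).mul (Real.hasDerivAt_log hx.ne')).sub (hasDerivAt_id x)
    have h := this.add_const 1
    refine h.congr_deriv ?_
    simp only [id_eq]
    field_simp
    ring
  have h2 : HasDerivAt (fun y : ℝ => Real.log ((y+1)/2)) (1/(x+1)) x := by
    have hin : HasDerivAt (fun y : ℝ => (y+1)/2) (1/2) x := by
      simpa using ((hasDerivAt_id x).add_const 1).div_const 2
    have := hin.log (by positivity)
    convert this using 1
    field_simp
  have h3 : HasDerivAt (fun y : ℝ => (y-1) * Real.log ((y+1)/2))
      (Real.log ((x+1)/2) + (x-1) * (1/(x+1))) x := by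
    have := (((hasDerivAt_id x).sub_const 1).mul h2)
    refine this.congr_deriv ?_
    simp only [id_eq]
    ring
  have := (h1.const_mul (9/8 : ℝ)).sub h3
  refine this.congr_deriv ?_
  unfold gAux'
  field_simp
  ring

lemma hasDeriv_gAux' {x : ℝ} (hx : 0 < x) :
    HasDerivAt gAux' (9/(8*x) - 1/(x+1) - 2/(x+1)^2) x := by
  have hx1 : (0:ℝ) < x + 1 := by linarith
  have h1 : HasDerivAt (fun y : ℝ => 9/8 * Real.log y) (9/8 * (1/x)) x := by
    simpa using (Real.hasDerivAt_log hx.ne').const_mul (9/8 : ℝ)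
  have h2 : HasDerivAt (fun y : ℝ => Real.log ((y+1)/2)) (1/(x+1)) x := by
    have hin : HasDerivAt (fun y : ℝ => (y+1)/2) (1/2) x := by
      simpa using ((hasDerivAt_id x).add_const 1).div_const 2
    have := hin.log (by positivity)
    convert this using 1
    field_simp
  have h3 : HasDerivAt (fun y : ℝ => (y-1)/(y+1)) (2/(x+1)^2) x := by
    have := ((hasDerivAt_id x).sub_const 1).div ((hasDerivAt_id x).add_const 1) hx1.ne'
    refine this.congr_deriv ?_
    simp only [id_eq]
    field_simp
    ring
  have := (h1.sub h2).sub h3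
  refine this.congr_deriv ?_
  field_simp

lemma gAux'_mono : MonotoneOn gAux' (Set.Ioi (0:ℝ)) := by
  apply monotoneOn_of_deriv_nonneg (convex_Ioi 0)
  · exact fun x hx => (hasDeriv_gAux' hx).continuousAt.continuousWithinAt
  · intro x hx
    rw [interior_Ioi] at hx
    exact (hasDeriv_gAux' hx).differentiableAt.differentiableWithinAt
  · intro x hx
    rw [interior_Ioi] at hx
    rw [(hasDeriv_gAux' hx).deriv]
    have hx0 := hx.out
    have hx1 : (0:ℝ) < x + 1 := by linarith
    have key : 9/(8*x) - 1/(x+1) - 2/(x+1)^2 = (x-3)^2 / (8 * x * (x+1)^2) := by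
      field_simp
      ring
    rw [key]
    positivity

lemma gAux'_one : gAux' 1 = 0 := by
  norm_num [gAux']

lemma gAux_one : gAux 1 = 0 := by
  norm_num [gAux]

lemma gAux_nonneg {x : ℝ} (hx : 0 < x) : 0 ≤ gAux x := by
  rcases le_total 1 x with h | h
  · have hmono : MonotoneOn gAux (Set.Icc 1 x) := by
      apply monotoneOn_of_deriv_nonneg (convex_Icc 1 x)
      · exact fun y hy => (hasDeriv_gAux (by linarith [hy.1] : (0:ℝ) < y)).continuousAt.continuousWithinAt
      · intro y hy
        rw [interior_Icc] at hy
        exact (hasDeriv_gAux (by linarith [hy.1] : (0:ℝ) < y)).differentiableAt.differentiableWithinAt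
      · intro y hy
        rw [interior_Icc] at hy
        have hy0 : (0:ℝ) < y := by linarith [hy.1]
        rw [(hasDeriv_gAux hy0).deriv]
        have := gAux'_mono (Set.mem_Ioi.mpr one_pos) (Set.mem_Ioi.mpr hy0) hy.1.le
        rw [gAux'_one] at this
        exact this
    have := hmono (Set.left_mem_Icc.mpr h) (Set.right_mem_Icc.mpr h) h
    rwa [gAux_one] at this
  · have hmono : AntitoneOn gAux (Set.Icc x 1) := by
      apply antitoneOn_of_deriv_nonpos (convex_Icc x 1)
      · exact fun y hy => (hasDeriv_gAux (lt_of_lt_of_le hx hy.1)).continuousAt.continuousWithinAt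
      · intro y hy
        rw [interior_Icc] at hy
        exact (hasDeriv_gAux (lt_of_lt_of_le hx hy.1.le)).differentiableAt.differentiableWithinAt
      · intro y hy
        rw [interior_Icc] at hy
        have hy0 : (0:ℝ) < y := lt_of_lt_of_le hx hy.1.le
        rw [(hasDeriv_gAux hy0).deriv]
        have := gAux'_mono (Set.mem_Ioi.mpr hy0) (Set.mem_Ioi.mpr one_pos) hy.2.le
        rw [gAux'_one] at this
        exact this
    have := hmono (Set.left_mem_Icc.mpr h) (Set.right_mem_Icc.mpr h) h
    rwa [gAux_one] at this

lemma key_pointwise {a b : ℝ} (ha : 0 < a) (hb : 0 < b) :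
    (a - b) * Real.log ((a + b) / (2 * b)) ≤
      9/8 * (a * Real.log (a / b)) - 9/8 * (a - b) := by
  have hab : 0 < a / b := div_pos ha hb
  have hg := gAux_nonneg hab
  have harg : (a / b + 1) / 2 = (a + b) / (2 * b) := by
    rw [div_eq_div_iff (by norm_num) (by positivity)]
    field_simp
  have hident : b * gAux (a / b) =
      9/8 * (a * Real.log (a / b)) - 9/8 * (a - b)
        - (a - b) * Real.log ((a + b) / (2 * b)) := by
    unfold gAux
    rw [harg]
    field_simp
    ring
  nlinarith [mul_nonneg hb.le hg]

theorem stmt3 {n : ℕ} (hn : 2 ≤ n) (p q : Fin n → ℝ)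
    (hp : ∀ i, 0 < p i) (hq : ∀ i, 0 < q i)
    (hp1 : ∑ i, p i = 1) (hq1 : ∑ i, q i = 1) :
    relJ p q ≤ (9 / 8) * KL p q := by
  have hsum : relJ p q ≤ ∑ i, (9/8 * (p i * Real.log (p i / q i)) - 9/8 * (p i - q i)) := by
    apply Finset.sum_le_sum
    intro i _
    exact key_pointwise (hp i) (hq i)
  have heq : ∑ i, (9/8 * (p i * Real.log (p i / q i)) - 9/8 * (p i - q i))
      = 9/8 * KL p q - 9/8 * ((∑ i, p i) - (∑ i, q i)) := by
    rw [Finset.sum_sub_distrib, ← Finset.mul_sum, KL, ← Finset.mul_sum, Finset.sum_sub_distrib]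
  rw [heq, hp1, hq1] at hsum
  simpa using hsum
end

section
/- Let P, Q ∈ Γ_n and let r, R satisfy 0 < r ≤ p_i/q_i ≤ R < ∞ for all i. If s ≤ −1 then (r^{−s}(3r+1)/(r+1)²)·Φ_s(P||Q) ≤ D(Q||P) ≤ (R^{−s}(3R+1)/(R+1)²)·Φ_s(P||Q), and if s ≥ 1/4 then (R^{−s}(3R+1)/(R+1)²)·Φ_s(P||Q) ≤ D(Q||P) ≤ (r^{−s}(3r+1)/(r+1)²)·Φ_s(P||Q). -/
open Real

/- ======================= auxiliary machinery ======================= -/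

noncomputable def psiF (x : ℝ) : ℝ := (1 - x) * (Real.log (1 + x) - Real.log 2 - Real.log x)
noncomputable def psiF' (x : ℝ) : ℝ :=
  -(Real.log (1 + x) - Real.log 2 - Real.log x) + (1 - x) * ((1 + x)⁻¹ - x⁻¹)
noncomputable def gfun (s x : ℝ) : ℝ := x ^ (-s) * (3 * x + 1) / (x + 1) ^ 2
noncomputable def phiG (s x : ℝ) : ℝ := (s * (s - 1))⁻¹ * (x ^ s - 1 - s * (x - 1))
noncomputable def phiG' (s x : ℝ) : ℝ := (s * (s - 1))⁻¹ * (s * x ^ (s - 1) - s)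
noncomputable def phiOne (x : ℝ) : ℝ := x * Real.log x - x + 1
noncomputable def phiOne' (x : ℝ) : ℝ := Real.log x



lemma psiF_hasDeriv {x : ℝ} (hx : 0 < x) : HasDerivAt psiF (psiF' x) x := by
  have h1 : HasDerivAt (fun y : ℝ => 1 - y) (-1) x := by
    simpa using (hasDerivAt_id x).const_sub 1
  have h2 : HasDerivAt (fun y : ℝ => Real.log (1 + y) - Real.log 2 - Real.log y)
      ((1 + x)⁻¹ - x⁻¹) x := by
    have ha : HasDerivAt (fun y : ℝ => Real.log (1 + y)) (1 + x)⁻¹ x := by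
      have := (Real.hasDerivAt_log (by linarith : (1:ℝ) + x ≠ 0)).comp x
        ((hasDerivAt_id x).const_add 1)
      simp at this; exact this
    exact (ha.sub_const (Real.log 2)).sub (Real.hasDerivAt_log hx.ne')
  have := h1.mul h2
  convert this using 1; rfl; rfl; rfl
  unfold psiF'
  ring

lemma psiF'_hasDeriv {x : ℝ} (hx : 0 < x) :
    HasDerivAt psiF' ((3 * x + 1) / (x ^ 2 * (x + 1) ^ 2)) x := by
  have h2 : HasDerivAt (fun y : ℝ => Real.log (1 + y) - Real.log 2 - Real.log y)
      ((1 + x)⁻¹ - x⁻¹) x := by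
    have ha : HasDerivAt (fun y : ℝ => Real.log (1 + y)) (1 + x)⁻¹ x := by
      have := (Real.hasDerivAt_log (by linarith : (1:ℝ) + x ≠ 0)).comp x
        ((hasDerivAt_id x).const_add 1)
      simp at this; exact this
    exact (ha.sub_const (Real.log 2)).sub (Real.hasDerivAt_log hx.ne')
  have h1 : HasDerivAt (fun y : ℝ => 1 - y) (-1) x := by
    simpa using (hasDerivAt_id x).const_sub 1
  have h3 : HasDerivAt (fun y : ℝ => (1 + y)⁻¹ - y⁻¹)
      (-((1 + x)⁻¹ ^ 2) - (-(x⁻¹ ^ 2))) x := by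
    have ha : HasDerivAt (fun y : ℝ => (1 + y)⁻¹) (-((1+x)⁻¹^2)) x := by
      have h := ((hasDerivAt_id x).const_add 1).inv (by linarith : (1:ℝ) + x ≠ 0)
      convert h using 1; rfl; rfl; rfl
      simp only [id]; field_simp
    have hb : HasDerivAt (fun y : ℝ => y⁻¹) (-(x⁻¹^2)) x := by
      have h := (hasDerivAt_id x).inv hx.ne'
      convert h using 1; rfl; rfl; rfl
      simp only [id]; field_simp
    exact ha.sub hb
  have := (h2.neg).add (h1.mul h3)
  convert this using 1; rfl; rfl; rfl
  have hx1 : (1:ℝ) + x ≠ 0 := by linarith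
  field_simp
  ring



lemma keyLemma {f f' f'' : ℝ → ℝ} {r R : ℝ} (hr1 : r ≤ 1) (hR1 : 1 ≤ R)
    (hf : ∀ x ∈ Set.Icc r R, HasDerivAt f (f' x) x)
    (hf' : ∀ x ∈ Set.Icc r R, HasDerivAt f' (f'' x) x)
    (h2 : ∀ x ∈ Set.Icc r R, 0 ≤ f'' x)
    (hf1 : f 1 = 0) (hf'1 : f' 1 = 0) :
    ∀ x ∈ Set.Icc r R, 0 ≤ f x := by
  have h1mem : (1:ℝ) ∈ Set.Icc r R := ⟨hr1, hR1⟩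
  -- f' is monotone on [r,R]
  have hmono : MonotoneOn f' (Set.Icc r R) := by
    apply monotoneOn_of_deriv_nonneg (convex_Icc r R)
    · exact fun x hx => (hf' x hx).continuousAt.continuousWithinAt
    · intro x hx
      rw [interior_Icc] at hx
      exact (hf' x (Set.mem_Icc_of_Ioo hx)).differentiableAt.differentiableWithinAt
    · intro x hx
      rw [interior_Icc] at hx
      rw [(hf' x (Set.mem_Icc_of_Ioo hx)).deriv]
      exact h2 x (Set.mem_Icc_of_Ioo hx)
  intro x hx
  rcases le_total x 1 with hx1 | hx1
  · -- f is antitone on [x,1]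
    have hanti : AntitoneOn f (Set.Icc x 1) := by
      apply antitoneOn_of_deriv_nonpos (convex_Icc x 1)
      · intro y hy
        have hy' : y ∈ Set.Icc r R := ⟨le_trans hx.1 hy.1, le_trans hy.2 hR1⟩
        exact (hf y hy').continuousAt.continuousWithinAt
      · intro y hy
        rw [interior_Icc] at hy
        have hy' : y ∈ Set.Icc r R := ⟨le_trans hx.1 hy.1.le, le_trans hy.2.le hR1⟩
        exact (hf y hy').differentiableAt.differentiableWithinAt
      · intro y hy
        rw [interior_Icc] at hy
        have hy' : y ∈ Set.Icc r R := ⟨le_trans hx.1 hy.1.le, le_trans hy.2.le hR1⟩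
        rw [(hf y hy').deriv]
        calc f' y ≤ f' 1 := hmono hy' h1mem hy.2.le
        _ = 0 := hf'1
    have := hanti (Set.left_mem_Icc.mpr hx1) (Set.right_mem_Icc.mpr hx1) hx1
    rw [hf1] at this
    exact this
  · -- f is monotone on [1,x]
    have hmonof : MonotoneOn f (Set.Icc 1 x) := by
      apply monotoneOn_of_deriv_nonneg (convex_Icc 1 x)
      · intro y hy
        have hy' : y ∈ Set.Icc r R := ⟨le_trans hr1 hy.1, le_trans hy.2 hx.2⟩
        exact (hf y hy').continuousAt.continuousWithinAt
      · intro y hy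
        rw [interior_Icc] at hy
        have hy' : y ∈ Set.Icc r R := ⟨le_trans hr1 hy.1.le, le_trans hy.2.le hx.2⟩
        exact (hf y hy').differentiableAt.differentiableWithinAt
      · intro y hy
        rw [interior_Icc] at hy
        have hy' : y ∈ Set.Icc r R := ⟨le_trans hr1 hy.1.le, le_trans hy.2.le hx.2⟩
        rw [(hf y hy').deriv]
        calc (0:ℝ) = f' 1 := hf'1.symm
        _ ≤ f' y := hmono h1mem hy' hy.1.le
    have := hmonof (Set.left_mem_Icc.mpr hx1) (Set.right_mem_Icc.mpr hx1) hx1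
    rw [hf1] at this
    exact this




lemma gfun_hasDeriv (s : ℝ) {x : ℝ} (hx : 0 < x) :
    HasDerivAt (gfun s)
      (x ^ (-s - 1) * (-s * (3 * x ^ 2 + 4 * x + 1) + x - 3 * x ^ 2) / (x + 1) ^ 3) x := by
  have hx1 : (0:ℝ) < x + 1 := by linarith
  have h1 : HasDerivAt (fun y : ℝ => y ^ (-s)) (-s * x ^ (-s - 1)) x :=
    Real.hasDerivAt_rpow_const (Or.inl hx.ne')
  have h2 : HasDerivAt (fun y : ℝ => 3 * y + 1) 3 x := by
    simpa using ((hasDerivAt_id x).const_mul 3).add_const 1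
  have h3 : HasDerivAt (fun y : ℝ => (y + 1) ^ 2) (2 * (x + 1)) x := by
    have := ((hasDerivAt_id x).add_const 1).pow 2
    exact this.congr_deriv (by simp only [id]; ring)
  have h := (h1.mul h2).div h3 (by positivity)
  convert h using 1; rfl; rfl; rfl
  have hxs : x ^ (-s) = x ^ (-s - 1) * x := by
    rw [← Real.rpow_add_one hx.ne']; ring_nf
  simp only [Pi.mul_apply]
  rw [hxs]
  field_simp
  ring
lemma gfun_mono {s : ℝ} (hs : s ≤ -1) : MonotoneOn (gfun s) (Set.Ioi 0) := by
  apply monotoneOn_of_deriv_nonneg (convex_Ioi 0)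
  · exact fun x hx => (gfun_hasDeriv s hx).continuousAt.continuousWithinAt
  · intro x hx
    rw [interior_Ioi] at hx
    exact (gfun_hasDeriv s hx).differentiableAt.differentiableWithinAt
  · intro x hx
    rw [interior_Ioi] at hx
    rw [(gfun_hasDeriv s hx).deriv]
    have hx0 : (0:ℝ) < x := hx
    have h1 : (0:ℝ) ≤ x ^ (-s - 1) := Real.rpow_nonneg hx.le _
    have h2 : (0:ℝ) ≤ -s * (3 * x ^ 2 + 4 * x + 1) + x - 3 * x ^ 2 := by
      nlinarith [mul_nonneg (by linarith : (0:ℝ) ≤ -s - 1) (by nlinarith [hx0.le, sq_nonneg x] : (0:ℝ) ≤ 3 * x ^ 2 + 4 * x + 1), hx0.le]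
    have h3 : (0:ℝ) < (x + 1) ^ 3 := by positivity
    exact div_nonneg (mul_nonneg h1 h2) h3.le
lemma gfun_anti {s : ℝ} (hs : 1 / 4 ≤ s) : AntitoneOn (gfun s) (Set.Ioi 0) := by
  apply antitoneOn_of_deriv_nonpos (convex_Ioi 0)
  · exact fun x hx => (gfun_hasDeriv s hx).continuousAt.continuousWithinAt
  · intro x hx
    rw [interior_Ioi] at hx
    exact (gfun_hasDeriv s hx).differentiableAt.differentiableWithinAt
  · intro x hx
    rw [interior_Ioi] at hx
    rw [(gfun_hasDeriv s hx).deriv]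
    have hx0 : (0:ℝ) < x := hx
    have h1 : (0:ℝ) ≤ x ^ (-s - 1) := Real.rpow_nonneg hx.le _
    have h2 : -s * (3 * x ^ 2 + 4 * x + 1) + x - 3 * x ^ 2 ≤ 0 := by
      nlinarith [mul_nonneg (by linarith : (0:ℝ) ≤ s - 1/4) (by nlinarith [hx0.le, sq_nonneg x] : (0:ℝ) ≤ 3 * x ^ 2 + 4 * x + 1), sq_nonneg x, hx0.le]
    have h3 : (0:ℝ) < (x + 1) ^ 3 := by positivity
    exact div_nonpos_of_nonpos_of_nonneg (mul_nonpos_of_nonneg_of_nonpos h1 h2) h3.le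



lemma gfun_mul_rpow {s x : ℝ} (hx : 0 < x) :
    gfun s x * x ^ (s - 2) = (3 * x + 1) / (x ^ 2 * (x + 1) ^ 2) := by
  unfold gfun
  rw [div_mul_eq_mul_div, mul_right_comm, ← Real.rpow_add hx]
  rw [show -s + (s - 2) = (-2 : ℝ) by ring]
  rw [show ((-2:ℝ)) = ((-2 : ℤ) : ℝ) by norm_num, Real.rpow_intCast]
  rw [zpow_neg, zpow_two]
  field_simp




lemma phiG_hasDeriv {s x : ℝ} (hx : 0 < x) : HasDerivAt (phiG s) (phiG' s x) x := by
  have h1 : HasDerivAt (fun y : ℝ => y ^ s) (s * x ^ (s - 1)) x :=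
    Real.hasDerivAt_rpow_const (Or.inl hx.ne')
  have h2 : HasDerivAt (fun y : ℝ => y ^ s - 1 - s * (y - 1)) (s * x ^ (s - 1) - s) x := by
    have h3 : HasDerivAt (fun y : ℝ => s * (y - 1)) s x := by
      simpa using ((hasDerivAt_id x).sub_const 1).const_mul s
    exact (h1.sub_const 1).sub h3
  exact h2.const_mul _

lemma phiG'_hasDeriv {s x : ℝ} (hs0 : s ≠ 0) (hs1 : s ≠ 1) (hx : 0 < x) :
    HasDerivAt (phiG' s) (x ^ (s - 2)) x := by
  have h1 : HasDerivAt (fun y : ℝ => y ^ (s - 1)) ((s - 1) * x ^ (s - 1 - 1)) x :=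
    Real.hasDerivAt_rpow_const (Or.inl hx.ne')
  have h2 := ((h1.const_mul s).sub_const s).const_mul (s * (s - 1))⁻¹
  convert h2 using 1; rfl; rfl; rfl
  have : s - 1 - 1 = s - 2 := by ring
  rw [this]
  have hss : s - 1 ≠ 0 := sub_ne_zero.mpr hs1
  field_simp
lemma phiG_one (s : ℝ) : phiG s 1 = 0 := by simp [phiG]
lemma phiG'_one (s : ℝ) : phiG' s 1 = 0 := by simp [phiG']


lemma phiOne_hasDeriv {x : ℝ} (hx : 0 < x) : HasDerivAt phiOne (phiOne' x) x := by
  have h1 : HasDerivAt (fun y : ℝ => y * Real.log y) (Real.log x + 1) x := by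
    have := (hasDerivAt_id x).mul (Real.hasDerivAt_log hx.ne')
    convert this using 1; rfl; rfl; rfl
    simp only [id]; field_simp
  have := (h1.sub (hasDerivAt_id x)).add_const 1
  convert this using 1; rfl; rfl; rfl
  simp [phiOne']
lemma phiOne'_hasDeriv {x : ℝ} (hx : 0 < x) : HasDerivAt phiOne' (x ^ ((1:ℝ) - 2)) x := by
  have := Real.hasDerivAt_log hx.ne'
  convert this using 1; rfl
  rw [show (1:ℝ) - 2 = -1 by norm_num, Real.rpow_neg_one]
lemma phiOne_one : phiOne 1 = 0 := by simp [phiOne]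
lemma phiOne'_one : phiOne' 1 = 0 := by simp [phiOne']


lemma psiF_one : psiF 1 = 0 := by simp [psiF]
lemma psiF'_one : psiF' 1 = 0 := by
  simp [psiF', show (1:ℝ) + 1 = 2 by norm_num]

lemma pointwise_lower {s c r R : ℝ} (hr : 0 < r) (hr1 : r ≤ 1) (hR1 : 1 ≤ R)
    {phi phi' : ℝ → ℝ}
    (hphi : ∀ x, 0 < x → HasDerivAt phi (phi' x) x)
    (hphi' : ∀ x, 0 < x → HasDerivAt phi' (x ^ (s - 2)) x)
    (hphi1 : phi 1 = 0) (hphi'1 : phi' 1 = 0)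
    (hc : ∀ x ∈ Set.Icc r R, c ≤ gfun s x) :
    ∀ x ∈ Set.Icc r R, c * phi x ≤ psiF x := by
  have hpos : ∀ x ∈ Set.Icc r R, (0:ℝ) < x := fun x hx => lt_of_lt_of_le hr hx.1
  have key := keyLemma (f := fun x => psiF x - c * phi x)
    (f' := fun x => psiF' x - c * phi' x)
    (f'' := fun x => (3 * x + 1) / (x ^ 2 * (x + 1) ^ 2) - c * x ^ (s - 2))
    hr1 hR1
    (fun x hx => (psiF_hasDeriv (hpos x hx)).sub ((hphi x (hpos x hx)).const_mul c))
    (fun x hx => (psiF'_hasDeriv (hpos x hx)).sub ((hphi' x (hpos x hx)).const_mul c))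
    (fun x hx => by
      have hx0 := hpos x hx
      have h1 : c * x ^ (s - 2) ≤ gfun s x * x ^ (s - 2) :=
        mul_le_mul_of_nonneg_right (hc x hx) (Real.rpow_nonneg hx0.le _)
      rw [gfun_mul_rpow hx0] at h1
      linarith)
    (by beta_reduce; rw [psiF_one, hphi1]; ring)
    (by beta_reduce; rw [psiF'_one, hphi'1]; ring)
  intro x hx
  have := key x hx
  beta_reduce at this
  linarith [this]

lemma pointwise_upper {s c r R : ℝ} (hr : 0 < r) (hr1 : r ≤ 1) (hR1 : 1 ≤ R)
    {phi phi' : ℝ → ℝ}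
    (hphi : ∀ x, 0 < x → HasDerivAt phi (phi' x) x)
    (hphi' : ∀ x, 0 < x → HasDerivAt phi' (x ^ (s - 2)) x)
    (hphi1 : phi 1 = 0) (hphi'1 : phi' 1 = 0)
    (hc : ∀ x ∈ Set.Icc r R, gfun s x ≤ c) :
    ∀ x ∈ Set.Icc r R, psiF x ≤ c * phi x := by
  have hpos : ∀ x ∈ Set.Icc r R, (0:ℝ) < x := fun x hx => lt_of_lt_of_le hr hx.1
  have key := keyLemma (f := fun x => c * phi x - psiF x)
    (f' := fun x => c * phi' x - psiF' x)
    (f'' := fun x => c * x ^ (s - 2) - (3 * x + 1) / (x ^ 2 * (x + 1) ^ 2))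
    hr1 hR1
    (fun x hx => ((hphi x (hpos x hx)).const_mul c).sub (psiF_hasDeriv (hpos x hx)))
    (fun x hx => ((hphi' x (hpos x hx)).const_mul c).sub (psiF'_hasDeriv (hpos x hx)))
    (fun x hx => by
      have hx0 := hpos x hx
      have h1 : gfun s x * x ^ (s - 2) ≤ c * x ^ (s - 2) :=
        mul_le_mul_of_nonneg_right (hc x hx) (Real.rpow_nonneg hx0.le _)
      rw [gfun_mul_rpow hx0] at h1
      linarith)
    (by beta_reduce; rw [psiF_one, hphi1]; ring)
    (by beta_reduce; rw [psiF'_one, hphi'1]; ring)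
  intro x hx
  have := key x hx
  beta_reduce at this
  linarith [this]


variable {n : ℕ} {p q : Fin n → ℝ}

lemma sum_psi (hp : ∀ i, 0 < p i) (hq : ∀ i, 0 < q i) :
    relJ q p = ∑ i, q i * psiF (p i / q i) := by
  unfold relJ psiF
  apply Finset.sum_congr rfl
  intro i _
  have hpi := hp i; have hqi := hq i
  have h1 : (1 : ℝ) + p i / q i = (q i + p i) / q i := by field_simp
  have h2 : q i * (1 - p i / q i) = q i - p i := by field_simp
  rw [h1, Real.log_div (by positivity) hqi.ne', Real.log_div hpi.ne' hqi.ne',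
    Real.log_div (by positivity) (by positivity : (2:ℝ) * p i ≠ 0),
    Real.log_mul two_ne_zero hpi.ne']
  rw [show q i * ((1 - p i / q i) * (Real.log (q i + p i) - Real.log (q i) - Real.log 2 -
      (Real.log (p i) - Real.log (q i)))) = (q i * (1 - p i / q i)) *
      (Real.log (q i + p i) - Real.log 2 - Real.log (p i)) by ring, h2]
  ring

lemma sum_phiG {s : ℝ} (hs0 : s ≠ 0) (hs1 : s ≠ 1)
    (hp : ∀ i, 0 < p i) (hq : ∀ i, 0 < q i)
    (hp1 : ∑ i, p i = 1) (hq1 : ∑ i, q i = 1) :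
    Phi s p q = ∑ i, q i * phiG s (p i / q i) := by
  unfold Phi phiG
  rw [if_neg hs0, if_neg hs1]
  have hterm : ∀ i, q i * ((s * (s - 1))⁻¹ * ((p i / q i) ^ s - 1 - s * (p i / q i - 1)))
      = (s * (s - 1))⁻¹ * (p i ^ s * q i ^ (1 - s) - q i - s * (p i - q i)) := by
    intro i
    have hpi := hp i; have hqi := hq i
    have h1 : (p i / q i) ^ s = p i ^ s / q i ^ s := Real.div_rpow hpi.le hqi.le s
    have h2 : q i * (p i ^ s / q i ^ s) = p i ^ s * q i ^ (1 - s) := by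
      rw [Real.rpow_sub hqi, Real.rpow_one]
      field_simp
    have h3 : q i * (p i / q i) = p i := by field_simp
    rw [h1]
    calc q i * ((s * (s - 1))⁻¹ * (p i ^ s / q i ^ s - 1 - s * (p i / q i - 1)))
        = (s * (s - 1))⁻¹ * (q i * (p i ^ s / q i ^ s) - q i - s * (q i * (p i / q i) - q i)) := by
          ring
      _ = (s * (s - 1))⁻¹ * (p i ^ s * q i ^ (1 - s) - q i - s * (p i - q i)) := by
          rw [h2, h3]
  rw [Finset.sum_congr rfl (fun i _ => hterm i), ← Finset.mul_sum]
  congr 1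
  rw [Finset.sum_sub_distrib, Finset.sum_sub_distrib, ← Finset.mul_sum,
    Finset.sum_sub_distrib, hp1, hq1]
  ring

lemma sum_phiOne (hp : ∀ i, 0 < p i) (hq : ∀ i, 0 < q i)
    (hp1 : ∑ i, p i = 1) (hq1 : ∑ i, q i = 1) :
    Phi 1 p q = ∑ i, q i * phiOne (p i / q i) := by
  unfold Phi phiOne
  rw [if_neg one_ne_zero, if_pos rfl]
  have hterm : ∀ i, q i * (p i / q i * Real.log (p i / q i) - p i / q i + 1)
      = p i * Real.log (p i / q i) - p i + q i := by
    intro i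
    have hqi := (hq i).ne'
    field_simp
  rw [Finset.sum_congr rfl (fun i _ => hterm i)]
  rw [Finset.sum_add_distrib, Finset.sum_sub_distrib, hp1, hq1]
  ring


lemma sum_bound_upper {n : ℕ} {p q : Fin n → ℝ} (hq : ∀ i, 0 < q i) {r R c : ℝ}
    (hx : ∀ i, p i / q i ∈ Set.Icc r R) {phi : ℝ → ℝ}
    (h : ∀ y ∈ Set.Icc r R, psiF y ≤ c * phi y) :
    ∑ i, q i * psiF (p i / q i) ≤ c * ∑ i, q i * phi (p i / q i) := by
  rw [Finset.mul_sum]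
  apply Finset.sum_le_sum
  intro i _
  rw [mul_left_comm]
  exact mul_le_mul_of_nonneg_left (h _ (hx i)) (hq i).le

lemma sum_bound_lower {n : ℕ} {p q : Fin n → ℝ} (hq : ∀ i, 0 < q i) {r R c : ℝ}
    (hx : ∀ i, p i / q i ∈ Set.Icc r R) {phi : ℝ → ℝ}
    (h : ∀ y ∈ Set.Icc r R, c * phi y ≤ psiF y) :
    c * ∑ i, q i * phi (p i / q i) ≤ ∑ i, q i * psiF (p i / q i) := by
  rw [Finset.mul_sum]
  apply Finset.sum_le_sum
  intro i _
  rw [mul_left_comm]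
  exact mul_le_mul_of_nonneg_left (h _ (hx i)) (hq i).le

theorem stmt4 {n : ℕ} (hn : 2 ≤ n) (p q : Fin n → ℝ)
    (hp : ∀ i, 0 < p i) (hq : ∀ i, 0 < q i)
    (hp1 : ∑ i, p i = 1) (hq1 : ∑ i, q i = 1)
    (r R : ℝ) (hr : 0 < r)
    (hlow : ∀ i, r ≤ p i / q i) (hupp : ∀ i, p i / q i ≤ R) (s : ℝ) :
    (s ≤ -1 →
      (r ^ (-s) * (3 * r + 1) / (r + 1) ^ 2) * Phi s p q ≤ relJ q p ∧
        relJ q p ≤ (R ^ (-s) * (3 * R + 1) / (R + 1) ^ 2) * Phi s p q) ∧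
    (1 / 4 ≤ s →
      (R ^ (-s) * (3 * R + 1) / (R + 1) ^ 2) * Phi s p q ≤ relJ q p ∧
        relJ q p ≤ (r ^ (-s) * (3 * r + 1) / (r + 1) ^ 2) * Phi s p q) := by
  have hq0 : ∀ i, (0:ℝ) < q i := hq
  have hxmem : ∀ i, p i / q i ∈ Set.Icc r R := fun i => ⟨hlow i, hupp i⟩
  have hr1 : r ≤ 1 := by
    have h1 : ∑ i, q i * r ≤ ∑ i, p i := by
      apply Finset.sum_le_sum
      intro i _
      have := (le_div_iff₀ (hq i)).mp (hlow i)
      linarith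
    rw [hp1, ← Finset.sum_mul, hq1, one_mul] at h1
    exact h1
  have hR1 : 1 ≤ R := by
    have h1 : ∑ i, p i ≤ ∑ i, q i * R := by
      apply Finset.sum_le_sum
      intro i _
      have := (div_le_iff₀ (hq i)).mp (hupp i)
      linarith
    rw [hp1, ← Finset.sum_mul, hq1, one_mul] at h1
    exact h1
  have hRpos : (0:ℝ) < R := lt_of_lt_of_le zero_lt_one hR1
  have hmemr : r ∈ Set.Ioi (0:ℝ) := hr
  have hmemR : R ∈ Set.Ioi (0:ℝ) := hRpos
  have hpsi_eq := sum_psi hp hq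
  constructor
  · intro hs
    have hs0 : s ≠ 0 := ne_of_lt (by linarith)
    have hs1 : s ≠ 1 := ne_of_lt (by linarith)
    have hphi_eq := sum_phiG hs0 hs1 hp hq hp1 hq1
    have hD := fun (y : ℝ) (hy : 0 < y) => phiG_hasDeriv (s := s) hy
    have hD' := fun (y : ℝ) (hy : 0 < y) => phiG'_hasDeriv hs0 hs1 hy
    constructor
    · have hcmp := pointwise_lower hr hr1 hR1 hD hD' (phiG_one s) (phiG'_one s)
        (fun y hy => gfun_mono hs hmemr (Set.mem_Ioi.mpr (lt_of_lt_of_le hr hy.1)) hy.1)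
      rw [hphi_eq, hpsi_eq]
      exact sum_bound_lower hq hxmem hcmp
    · have hcmp := pointwise_upper hr hr1 hR1 hD hD' (phiG_one s) (phiG'_one s)
        (fun y hy => gfun_mono hs (Set.mem_Ioi.mpr (lt_of_lt_of_le hr hy.1)) hmemR hy.2)
      rw [hphi_eq, hpsi_eq]
      exact sum_bound_upper hq hxmem hcmp
  · intro hs
    have hs0 : s ≠ 0 := ne_of_gt (by linarith)
    by_cases hs1 : s = 1
    · subst hs1
      have hphi_eq := sum_phiOne hp hq hp1 hq1
      have hD := fun (y : ℝ) (hy : 0 < y) => phiOne_hasDeriv hy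
      have hD' := fun (y : ℝ) (hy : 0 < y) => phiOne'_hasDeriv hy
      constructor
      · have hcmp := pointwise_lower hr hr1 hR1 hD hD' phiOne_one phiOne'_one
          (fun y hy => gfun_anti hs (Set.mem_Ioi.mpr (lt_of_lt_of_le hr hy.1)) hmemR hy.2)
        rw [hphi_eq, hpsi_eq]
        exact sum_bound_lower hq hxmem hcmp
      · have hcmp := pointwise_upper hr hr1 hR1 hD hD' phiOne_one phiOne'_one
          (fun y hy => gfun_anti hs hmemr (Set.mem_Ioi.mpr (lt_of_lt_of_le hr hy.1)) hy.1)
        rw [hphi_eq, hpsi_eq]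
        exact sum_bound_upper hq hxmem hcmp
    · have hphi_eq := sum_phiG hs0 hs1 hp hq hp1 hq1
      have hD := fun (y : ℝ) (hy : 0 < y) => phiG_hasDeriv (s := s) hy
      have hD' := fun (y : ℝ) (hy : 0 < y) => phiG'_hasDeriv hs0 hs1 hy
      constructor
      · have hcmp := pointwise_lower hr hr1 hR1 hD hD' (phiG_one s) (phiG'_one s)
          (fun y hy => gfun_anti hs (Set.mem_Ioi.mpr (lt_of_lt_of_le hr hy.1)) hmemR hy.2)
        rw [hphi_eq, hpsi_eq]
        exact sum_bound_lower hq hxmem hcmp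
      · have hcmp := pointwise_upper hr hr1 hR1 hD hD' (phiG_one s) (phiG'_one s)
          (fun y hy => gfun_anti hs hmemr (Set.mem_Ioi.mpr (lt_of_lt_of_le hr hy.1)) hy.1)
        rw [hphi_eq, hpsi_eq]
        exact sum_bound_upper hq hxmem hcmp
end

section
/- For all P, Q ∈ Γ_n, D(Q||P) ≤ (9/8)·K(Q||P). -/
open Real

noncomputable def gFun (x : ℝ) : ℝ :=
  9/8 * (x * Real.log x - x + 1) - (x - 1) * Real.log ((x + 1) / 2)

noncomputable def gFun' (x : ℝ) : ℝ :=
  9/8 * Real.log x - Real.log ((x + 1) / 2) - (x - 1) / (x + 1)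

lemma hasDerivAt_gFun {x : ℝ} (hx : 0 < x) : HasDerivAt gFun (gFun' x) x := by
  have hx1 : (0:ℝ) < x + 1 := by linarith
  have h1 : HasDerivAt (fun y : ℝ => y * Real.log y) (Real.log x + 1) x :=
    Real.hasDerivAt_mul_log hx.ne'
  have h2 : HasDerivAt (fun y : ℝ => (y + 1) / 2) (1 / 2) x := by
    simpa using ((hasDerivAt_id x).add_const 1).div_const 2
  have h3 : HasDerivAt (fun y : ℝ => Real.log ((y + 1) / 2)) ((1/2) / ((x + 1) / 2)) x :=
    h2.log (by positivity)
  have h4 : HasDerivAt (fun y : ℝ => (y - 1) * Real.log ((y + 1) / 2))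
      (1 * Real.log ((x + 1) / 2) + (x - 1) * ((1/2) / ((x + 1) / 2))) x :=
    ((hasDerivAt_id x).sub_const 1).mul h3
  have h5 : HasDerivAt (fun y : ℝ => 9/8 * (y * Real.log y - y + 1))
      ((9/8 : ℝ) * (Real.log x + 1 - 1)) x := by
    exact ((h1.sub (hasDerivAt_id x)).add_const 1).const_mul (9/8 : ℝ)
  have h6 : (1:ℝ)/2 / ((x + 1) / 2) = 1 / (x + 1) := by
    field_simp
  rw [h6] at h4
  have := h5.sub h4
  refine HasDerivAt.congr_deriv this ?_
  rw [gFun']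
  have h7 : (x - 1) / (x + 1) = (x - 1) * (1 / (x + 1)) := by ring
  rw [h7]
  ring

lemma hasDerivAt_gFun' {x : ℝ} (hx : 0 < x) :
    HasDerivAt gFun' ((x - 3)^2 / (8 * x * (x + 1)^2)) x := by
  have hx1 : (0:ℝ) < x + 1 := by linarith
  have h1 : HasDerivAt (fun y : ℝ => 9/8 * Real.log y) ((9/8 : ℝ) * x⁻¹) x :=
    (Real.hasDerivAt_log hx.ne').const_mul (9/8 : ℝ)
  have h2 : HasDerivAt (fun y : ℝ => (y + 1) / 2) (1 / 2) x := by
    simpa using ((hasDerivAt_id x).add_const 1).div_const 2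
  have h3 : HasDerivAt (fun y : ℝ => Real.log ((y + 1) / 2)) ((1/2) / ((x + 1) / 2)) x :=
    h2.log (by positivity)
  have h4 : HasDerivAt (fun y : ℝ => (y - 1) / (y + 1))
      ((1 * (x + 1) - (x - 1) * 1) / (x + 1)^2) x :=
    ((hasDerivAt_id x).sub_const 1).div ((hasDerivAt_id x).add_const 1) hx1.ne'
  have := (h1.sub h3).sub h4
  refine HasDerivAt.congr_deriv this ?_
  field_simp
  ring

lemma gFun'_one : gFun' 1 = 0 := by
  simp [gFun']

lemma gFun_one : gFun 1 = 0 := by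
  simp [gFun]

lemma gFun'_mono : MonotoneOn gFun' (Set.Ioi 0) := by
  apply monotoneOn_of_deriv_nonneg (convex_Ioi 0)
  · exact fun x hx => (hasDerivAt_gFun' (Set.mem_Ioi.1 hx)).continuousAt.continuousWithinAt
  · intro x hx
    rw [interior_Ioi] at hx
    exact (hasDerivAt_gFun' (Set.mem_Ioi.1 hx)).differentiableAt.differentiableWithinAt
  · intro x hx
    rw [interior_Ioi] at hx
    have hx0 := Set.mem_Ioi.1 hx
    rw [(hasDerivAt_gFun' hx0).deriv]
    positivity

lemma gFun_nonneg {x : ℝ} (hx : 0 < x) : 0 ≤ gFun x := by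
  rcases le_or_gt 1 x with h | h
  · have hmono : MonotoneOn gFun (Set.Ici 1) := by
      apply monotoneOn_of_deriv_nonneg (convex_Ici 1)
      · intro y hy
        have : (0:ℝ) < y := lt_of_lt_of_le one_pos hy
        exact (hasDerivAt_gFun this).continuousAt.continuousWithinAt
      · intro y hy
        rw [interior_Ici] at hy
        have : (0:ℝ) < y := lt_trans one_pos hy
        exact (hasDerivAt_gFun this).differentiableAt.differentiableWithinAt
      · intro y hy
        rw [interior_Ici] at hy
        have hy0 : (0:ℝ) < y := lt_trans one_pos hy
        rw [(hasDerivAt_gFun hy0).deriv]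
        have := gFun'_mono (Set.mem_Ioi.2 one_pos) (Set.mem_Ioi.2 hy0) (le_of_lt hy)
        rw [gFun'_one] at this
        exact this
    have := hmono (Set.mem_Ici.2 le_rfl) (Set.mem_Ici.2 h) h
    rwa [gFun_one] at this
  · have hanti : AntitoneOn gFun (Set.Ioc 0 1) := by
      apply antitoneOn_of_deriv_nonpos (convex_Ioc 0 1)
      · intro y hy
        exact (hasDerivAt_gFun hy.1).continuousAt.continuousWithinAt
      · intro y hy
        rw [interior_Ioc] at hy
        exact (hasDerivAt_gFun hy.1).differentiableAt.differentiableWithinAt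
      · intro y hy
        rw [interior_Ioc] at hy
        rw [(hasDerivAt_gFun hy.1).deriv]
        have := gFun'_mono (Set.mem_Ioi.2 hy.1) (Set.mem_Ioi.2 one_pos) (le_of_lt hy.2)
        rw [gFun'_one] at this
        exact this
    have := hanti (Set.mem_Ioc.2 ⟨hx, le_of_lt h⟩) (Set.mem_Ioc.2 ⟨one_pos, le_rfl⟩) (le_of_lt h)
    rwa [gFun_one] at this

lemma key_ineq {a b : ℝ} (ha : 0 < a) (hb : 0 < b) :
    (b - a) * Real.log ((b + a) / (2 * a)) ≤ 9/8 * (b * Real.log (b / a) - b + a) := by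
  have hx : 0 < b / a := div_pos hb ha
  have hg := gFun_nonneg hx
  have harg : (b / a + 1) / 2 = (b + a) / (2 * a) := by
    rw [div_eq_div_iff (by norm_num) (by positivity)]
    field_simp
  have hexp : a * gFun (b / a) =
      9/8 * (b * Real.log (b / a) - b + a) - (b - a) * Real.log ((b + a) / (2 * a)) := by
    rw [gFun, harg]
    generalize Real.log (b / a) = L1
    generalize Real.log ((b + a) / (2 * a)) = L2
    field_simp
  nlinarith [mul_nonneg ha.le hg, hexp]

theorem stmt5 {n : ℕ} (hn : 2 ≤ n) (p q : Fin n → ℝ)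
    (hp : ∀ i, 0 < p i) (hq : ∀ i, 0 < q i)
    (hp1 : ∑ i, p i = 1) (hq1 : ∑ i, q i = 1) :
    relJ q p ≤ (9 / 8) * KL q p := by
  rw [relJ, KL]
  calc ∑ i, (q i - p i) * Real.log ((q i + p i) / (2 * p i))
      ≤ ∑ i, 9/8 * (q i * Real.log (q i / p i) - q i + p i) :=
        Finset.sum_le_sum fun i _ => key_ineq (hp i) (hq i)
    _ = 9 / 8 * ∑ i, q i * Real.log (q i / p i) := by
        simp only [mul_sub, mul_add]
        rw [Finset.sum_add_distrib, Finset.sum_sub_distrib, ← Finset.mul_sum, ← Finset.mul_sum,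
          ← Finset.mul_sum, hp1, hq1]
        ring
end

section
/- For all P, Q ∈ Γ_n, F(P||Q) ≤ (1/4)·K(Q||P) and F(P||Q) ≤ (3√3/4)·h(P||Q). -/
open Real

/-- A function whose derivative is nonpositive on `(0,1)` and nonnegative on `(1,∞)`
attains its minimum over `(0,∞)` at `1`. -/
lemma key_min {f f' : ℝ → ℝ}
    (hder : ∀ x ∈ Set.Ioi (0:ℝ), HasDerivAt f (f' x) x)
    (hneg : ∀ x, 0 < x → x < 1 → f' x ≤ 0)
    (hpos : ∀ x, 1 < x → 0 ≤ f' x)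
    {t : ℝ} (ht : 0 < t) : f 1 ≤ f t := by
  rcases le_or_gt 1 t with h | h
  · have hmono : MonotoneOn f (Set.Ici 1) := by
      apply monotoneOn_of_hasDerivWithinAt_nonneg (convex_Ici 1) (f' := f')
      · intro x hx
        exact (hder x (Set.mem_Ioi.mpr (lt_of_lt_of_le one_pos hx))).continuousAt.continuousWithinAt
      · simp only [interior_Ici]
        intro x hx
        exact (hder x (Set.mem_Ioi.mpr (lt_trans one_pos hx))).hasDerivWithinAt
      · simp only [interior_Ici]
        intro x hx
        exact hpos x hx
    exact hmono (Set.mem_Ici.mpr le_rfl) (Set.mem_Ici.mpr h) h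
  · have hant : AntitoneOn f (Set.Icc t 1) := by
      apply antitoneOn_of_hasDerivWithinAt_nonpos (convex_Icc t 1) (f' := f')
      · intro x hx
        exact (hder x (lt_of_lt_of_le ht hx.1)).continuousAt.continuousWithinAt
      · simp only [interior_Icc]
        intro x hx
        exact (hder x (lt_trans ht hx.1)).hasDerivWithinAt
      · simp only [interior_Icc]
        intro x hx
        exact hneg x (lt_trans ht hx.1) hx.2
    exact hant (Set.mem_Icc.mpr ⟨le_rfl, h.le⟩) (Set.mem_Icc.mpr ⟨h.le, le_rfl⟩) h.le

lemma phi_mono : MonotoneOn (fun x : ℝ => Real.log x + 4 * (x + 1)⁻¹) (Set.Ioi 0) := by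
  have hder : ∀ x ∈ Set.Ioi (0:ℝ),
      HasDerivAt (fun x : ℝ => Real.log x + 4 * (x + 1)⁻¹)
        (x⁻¹ + 4 * (-1 / (x + 1) ^ 2)) x := by
    intro x hx
    have hx0 : (0:ℝ) < x := hx
    have hx1 : (0:ℝ) < x + 1 := by linarith
    have h1 : HasDerivAt (fun y : ℝ => y + 1) 1 x := (hasDerivAt_id x).add_const 1
    have h2 : HasDerivAt (fun y : ℝ => (y + 1)⁻¹) (-1 / (x + 1) ^ 2) x := by
      exact h1.inv hx1.ne'
    exact (Real.hasDerivAt_log hx0.ne').add (h2.const_mul 4)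
  apply monotoneOn_of_hasDerivWithinAt_nonneg (convex_Ioi 0)
      (f' := fun x => x⁻¹ + 4 * (-1 / (x + 1) ^ 2))
  · intro x hx; exact (hder x hx).continuousAt.continuousWithinAt
  · simp only [interior_Ioi]
    intro x hx; exact (hder x hx).hasDerivWithinAt
  · simp only [interior_Ioi]
    intro x hx
    have hx0 : (0:ℝ) < x := hx
    have e : x⁻¹ + 4 * (-1 / (x + 1) ^ 2) = ((x + 1) ^ 2 - 4 * x) / (x * (x + 1) ^ 2) := by
      field_simp; ring
    rw [e]
    exact div_nonneg (by nlinarith [sq_nonneg (x - 1)]) (by positivity)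

lemma pade_ge {t : ℝ} (ht : 1 ≤ t) : 2 * (t - 1) / (t + 1) ≤ Real.log t := by
  have ht0 : (0:ℝ) < t := lt_of_lt_of_le one_pos ht
  have h := phi_mono (Set.mem_Ioi.mpr one_pos) (Set.mem_Ioi.mpr ht0) ht
  simp only [Real.log_one] at h
  have ht1 : (0:ℝ) < t + 1 := by linarith
  have e : 2 * (t - 1) / (t + 1) = 2 - 4 * (t + 1)⁻¹ := by field_simp; ring
  rw [e]; norm_num at h; linarith

lemma pade_le {t : ℝ} (ht0 : 0 < t) (ht : t ≤ 1) : Real.log t ≤ 2 * (t - 1) / (t + 1) := by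
  have h := phi_mono (Set.mem_Ioi.mpr ht0) (Set.mem_Ioi.mpr one_pos) ht
  simp only [Real.log_one] at h
  have ht1 : (0:ℝ) < t + 1 := by linarith
  have e : 2 * (t - 1) / (t + 1) = 2 - 4 * (t + 1)⁻¹ := by field_simp; ring
  rw [e]; norm_num at h; linarith

lemma sqrt3_lo : (1.7:ℝ) ≤ Real.sqrt 3 := by
  nlinarith [Real.sq_sqrt (by norm_num : (0:ℝ) ≤ 3), Real.sqrt_nonneg 3]

lemma sqrt3_hi : Real.sqrt 3 ≤ (1.8:ℝ) := by
  nlinarith [Real.sq_sqrt (by norm_num : (0:ℝ) ≤ 3), Real.sqrt_nonneg 3]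

lemma g_nonneg {t : ℝ} (ht : 0 < t) :
    0 ≤ t * Real.log t / 4 + 3 * (1 - t) / 4 + Real.log ((1 + t) / 2) := by
  have hder : ∀ x ∈ Set.Ioi (0:ℝ),
      HasDerivAt (fun y : ℝ => y * Real.log y / 4 + 3 * (1 - y) / 4 + Real.log ((1 + y) / 2))
        (Real.log x / 4 - 1 / 2 + 1 / (1 + x)) x := by
    intro x hx
    have hx0 : (0:ℝ) < x := hx
    have hx1 : (0:ℝ) < 1 + x := by linarith
    have h1 : HasDerivAt (fun y : ℝ => y * Real.log y / 4)
        ((1 * Real.log x + x * x⁻¹) / 4) x :=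
      ((hasDerivAt_id x).mul (Real.hasDerivAt_log hx0.ne')).div_const 4
    have h2 : HasDerivAt (fun y : ℝ => 3 * (1 - y) / 4) (3 * -1 / 4) x :=
      ((((hasDerivAt_id x).const_sub 1)).const_mul 3).div_const 4
    have hc : HasDerivAt (fun y : ℝ => (1 + y) / 2) (1 / 2) x :=
      ((hasDerivAt_id x).const_add 1).div_const 2
    have h3 : HasDerivAt (fun y : ℝ => Real.log ((1 + y) / 2))
        ((1 / 2) / ((1 + x) / 2)) x := hc.log (by positivity)
    have h := (h1.add h2).add h3
    refine h.congr_deriv ?_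
    field_simp
    ring
  have h0 : ∀ x : ℝ, 0 < x → Real.log x / 4 - 1 / 2 + 1 / (1 + x)
      = (Real.log x - 2 * (x - 1) / (x + 1)) / 4 := by
    intro x hx
    have : (0:ℝ) < x + 1 := by linarith
    field_simp
    ring
  have hkey := key_min hder (fun x hx hx1 => by
      rw [h0 x hx]
      have := pade_le hx hx1.le
      linarith)
    (fun x hx1 => by
      rw [h0 x (lt_trans one_pos hx1)]
      have := pade_ge hx1.le
      linarith) ht
  simpa using hkey

lemma G_nonneg {u : ℝ} (hu : 0 < u) :
    0 ≤ 3 * Real.sqrt 3 / 8 * (1 - u) ^ 2 + (1 - u ^ 2) / 2 + Real.log ((1 + u ^ 2) / 2) := by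
  set s : ℝ := Real.sqrt 3 with hs
  have hs2 : s ^ 2 = 3 := Real.sq_sqrt (by norm_num)
  have hlo := sqrt3_lo
  have hhi := sqrt3_hi
  have hder : ∀ x ∈ Set.Ioi (0:ℝ),
      HasDerivAt (fun y : ℝ => 3 * s / 8 * (1 - y) ^ 2 + (1 - y ^ 2) / 2 + Real.log ((1 + y ^ 2) / 2))
        (3 * s / 4 * (x - 1) - x + 2 * x / (1 + x ^ 2)) x := by
    intro x hx
    have hx1 : (0:ℝ) < 1 + x ^ 2 := by positivity
    have h1 : HasDerivAt (fun y : ℝ => 3 * s / 8 * (1 - y) ^ 2)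
        (3 * s / 8 * ((2:ℕ) * (1 - x) ^ 1 * -1)) x :=
      (((hasDerivAt_id x).const_sub 1).pow 2).const_mul (3 * s / 8)
    have h2 : HasDerivAt (fun y : ℝ => (1 - y ^ 2) / 2) (-(2 * x ^ 1) / 2) x :=
      ((hasDerivAt_pow 2 x).const_sub 1).div_const 2
    have hc : HasDerivAt (fun y : ℝ => (1 + y ^ 2) / 2) ((2 * x ^ 1) / 2) x :=
      ((hasDerivAt_pow 2 x).const_add 1).div_const 2
    have h3 : HasDerivAt (fun y : ℝ => Real.log ((1 + y ^ 2) / 2))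
        (((2 * x ^ 1) / 2) / ((1 + x ^ 2) / 2)) x := hc.log (by positivity)
    have h := (h1.add h2).add h3
    refine h.congr_deriv ?_
    field_simp
    ring
  have hbr : ∀ x : ℝ, 0 < x → 3 * s / 4 * (x - 1) - x + 2 * x / (1 + x ^ 2)
      = ((x - 1) * (3 * s / 4 * (1 + x ^ 2) - x * (x + 1))) / (1 + x ^ 2) := by
    intro x hx
    have hx1 : (0:ℝ) < 1 + x ^ 2 := by positivity
    field_simp
    ring
  have hB : ∀ x : ℝ, 0 ≤ 3 * s / 4 * (1 + x ^ 2) - x * (x + 1) := by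
    intro x
    nlinarith [sq_nonneg ((3 * s - 4) * x - 2), hs2, hlo, hhi]
  have hkey := key_min hder (fun x hx hx1 => by
      rw [hbr x hx]
      apply div_nonpos_of_nonpos_of_nonneg
      · exact mul_nonpos_of_nonpos_of_nonneg (by linarith) (hB x)
      · positivity)
    (fun x hx1 => by
      rw [hbr x (lt_trans one_pos hx1)]
      apply div_nonneg
      · exact mul_nonneg (by linarith) (hB x)
      · positivity) hu
  simpa using hkey

lemma termB {a b : ℝ} (ha : 0 < a) (hb : 0 < b) :
    a * Real.log (2 * a / (a + b)) ≤ 1 / 4 * (b * Real.log (b / a)) + 3 / 4 * (a - b) := by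
  set t : ℝ := b / a with ht
  have ht0 : 0 < t := div_pos hb ha
  have key : 0 ≤ a * (t * Real.log t / 4 + 3 * (1 - t) / 4 + Real.log ((1 + t) / 2)) :=
    mul_nonneg ha.le (g_nonneg ht0)
  have h2 : (1 + t) / 2 = (a + b) / (2 * a) := by
    rw [ht]; field_simp
  have h3 : Real.log ((a + b) / (2 * a)) = -Real.log (2 * a / (a + b)) := by
    rw [← inv_div, Real.log_inv]
  rw [h2, h3] at key
  have ht2 : a * t = b := by rw [ht]; field_simp
  rw [← ht2] at key ⊢
  linarith [key]

lemma termC {a b : ℝ} (ha : 0 < a) (hb : 0 < b) :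
    a * Real.log (2 * a / (a + b)) ≤
      3 * Real.sqrt 3 / 8 * (Real.sqrt a - Real.sqrt b) ^ 2 + 1 / 2 * (a - b) := by
  have hsa0 : 0 < Real.sqrt a := Real.sqrt_pos.mpr ha
  have hsb0 : 0 < Real.sqrt b := Real.sqrt_pos.mpr hb
  set u : ℝ := Real.sqrt b / Real.sqrt a with hu
  have hu0 : 0 < u := div_pos hsb0 hsa0
  have key : 0 ≤ a * (3 * Real.sqrt 3 / 8 * (1 - u) ^ 2 + (1 - u ^ 2) / 2
      + Real.log ((1 + u ^ 2) / 2)) := mul_nonneg ha.le (G_nonneg hu0)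
  have hu2 : u ^ 2 = b / a := by
    rw [hu, div_pow, Real.sq_sqrt ha.le, Real.sq_sqrt hb.le]
  have h2 : (1 + u ^ 2) / 2 = (a + b) / (2 * a) := by
    rw [hu2]; field_simp
  have h3 : Real.log ((a + b) / (2 * a)) = -Real.log (2 * a / (a + b)) := by
    rw [← inv_div, Real.log_inv]
  rw [h2, h3] at key
  have hA : a * (1 - u) ^ 2 = (Real.sqrt a - Real.sqrt b) ^ 2 := by
    have h : Real.sqrt a * u = Real.sqrt b := by
      rw [hu]; field_simp
    have h2 : Real.sqrt a ^ 2 = a := Real.sq_sqrt ha.le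
    nlinarith [h, h2]
  have hb2 : a * u ^ 2 = b := by
    rw [hu2]; field_simp
  rw [← hA]
  rw [← hb2] at key ⊢
  linarith [key]

theorem stmt7 {n : ℕ} (hn : 2 ≤ n) (p q : Fin n → ℝ)
    (hp : ∀ i, 0 < p i) (hq : ∀ i, 0 < q i)
    (hp1 : ∑ i, p i = 1) (hq1 : ∑ i, q i = 1) :
    relJS p q ≤ (1 / 4) * KL q p ∧
      relJS p q ≤ (3 * Real.sqrt 3 / 4) * hell p q := by
  constructor
  · have h : relJS p q ≤ ∑ i, (1 / 4 * (q i * Real.log (q i / p i)) + 3 / 4 * (p i - q i)) :=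
      Finset.sum_le_sum (fun i _ => termB (hp i) (hq i))
    have e : ∑ i, (1 / 4 * (q i * Real.log (q i / p i)) + 3 / 4 * (p i - q i))
        = 1 / 4 * KL q p := by
      rw [Finset.sum_add_distrib, ← Finset.mul_sum, ← Finset.mul_sum,
        Finset.sum_sub_distrib, hp1, hq1]
      simp [KL]
    linarith [h, e.le, e.ge]
  · have h : relJS p q ≤ ∑ i, (3 * Real.sqrt 3 / 8 * (Real.sqrt (p i) - Real.sqrt (q i)) ^ 2
        + 1 / 2 * (p i - q i)) :=
      Finset.sum_le_sum (fun i _ => termC (hp i) (hq i))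
    have e : ∑ i, (3 * Real.sqrt 3 / 8 * (Real.sqrt (p i) - Real.sqrt (q i)) ^ 2
        + 1 / 2 * (p i - q i)) = 3 * Real.sqrt 3 / 4 * hell p q := by
      rw [Finset.sum_add_distrib, ← Finset.mul_sum, ← Finset.mul_sum,
        Finset.sum_sub_distrib, hp1, hq1]
      simp only [hell]
      ring
    rw [e] at h
    exact h
end

section
/- For all P, Q ∈ Γ_n, F(Q||P) ≤ (3√3/4)·h(P||Q) and F(Q||P) ≤ (1/4)·K(P||Q). -/
open Real

noncomputable def psi1 (t : ℝ) : ℝ :=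
  3 * Real.sqrt 3 / 8 * (t - 2 * Real.sqrt t + 1) + Real.log (1 + t) - Real.log 2 - (t - 1) / 2

noncomputable def psi2 (t : ℝ) : ℝ :=
  1 / 4 * (t * Real.log t) + Real.log (1 + t) - Real.log 2 - 3 / 4 * (t - 1)

lemma psi1_convex : ConvexOn ℝ (Set.Ioi (0:ℝ)) psi1 := by
  have hI : interior (Set.Ioi (0:ℝ)) = Set.Ioi 0 := interior_Ioi
  apply convexOn_of_hasDerivWithinAt2_nonneg (convex_Ioi 0)
    (f' := fun t => 3 * Real.sqrt 3 / 8 * (1 - (Real.sqrt t)⁻¹) + (1 + t)⁻¹ - 1 / 2)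
    (f'' := fun t => 3 * Real.sqrt 3 / 8 * (1 / (2 * t * Real.sqrt t)) - ((1 + t) ^ 2)⁻¹)
  · unfold psi1
    apply ContinuousOn.sub
    apply ContinuousOn.sub
    apply ContinuousOn.add
    · exact ((continuous_const.mul ((continuous_id.sub (continuous_const.mul
        Real.continuous_sqrt)).add continuous_const))).continuousOn
    · exact ContinuousOn.log (continuous_const.add continuous_id).continuousOn
        (fun x hx => by have : (0:ℝ) < x := hx; positivity)
    · exact continuousOn_const
    · exact (continuous_id.sub continuous_const).div_const 2 |>.continuousOn
  · rw [hI]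
    intro x hx
    have hx0 : (0:ℝ) < x := hx
    have hs : (0:ℝ) < Real.sqrt x := Real.sqrt_pos.mpr hx0
    have h1x : (0:ℝ) < 1 + x := by linarith
    have hsq : HasDerivAt Real.sqrt (1 / (2 * Real.sqrt x)) x := Real.hasDerivAt_sqrt hx0.ne'
    have hlog : HasDerivAt (fun t => Real.log (1 + t)) (1 / (1 + x)) x := by
      have := ((hasDerivAt_id x).const_add 1).log h1x.ne'
      simpa using this
    have h : HasDerivAt psi1
        (3 * Real.sqrt 3 / 8 * (1 - 2 * (1 / (2 * Real.sqrt x))) + 1 / (1 + x) - 1 / 2) x := by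
      unfold psi1
      exact ((((((hasDerivAt_id x).sub (hsq.const_mul 2)).add_const 1).const_mul
        (3 * Real.sqrt 3 / 8)).add hlog).sub_const (Real.log 2)).sub
        (((hasDerivAt_id x).sub_const 1).div_const 2)
    have heq : 3 * Real.sqrt 3 / 8 * (1 - 2 * (1 / (2 * Real.sqrt x))) + 1 / (1 + x) - 1 / 2
        = 3 * Real.sqrt 3 / 8 * (1 - (Real.sqrt x)⁻¹) + (1 + x)⁻¹ - 1 / 2 := by
      field_simp
    rw [heq] at h
    exact h.hasDerivWithinAt
  · rw [hI]
    intro x hx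
    have hx0 : (0:ℝ) < x := hx
    have hs : (0:ℝ) < Real.sqrt x := Real.sqrt_pos.mpr hx0
    have h1x : (0:ℝ) < 1 + x := by linarith
    have hsq : HasDerivAt Real.sqrt (1 / (2 * Real.sqrt x)) x := Real.hasDerivAt_sqrt hx0.ne'
    have hinv : HasDerivAt (fun t => (Real.sqrt t)⁻¹)
        (-(1 / (2 * Real.sqrt x)) / (Real.sqrt x) ^ 2) x := hsq.inv hs.ne'
    have hinv2 : HasDerivAt (fun t => (1 + t)⁻¹) (-(1) / (1 + x) ^ 2) x := by
      have := ((hasDerivAt_id x).const_add 1).inv h1x.ne'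
      exact this
    have h : HasDerivAt (fun t => 3 * Real.sqrt 3 / 8 * (1 - (Real.sqrt t)⁻¹) + (1 + t)⁻¹ - 1 / 2)
        (3 * Real.sqrt 3 / 8 * (0 - -(1 / (2 * Real.sqrt x)) / (Real.sqrt x) ^ 2) + -(1) / (1 + x) ^ 2) x := by
      exact ((((hasDerivAt_const x (1:ℝ)).sub hinv).const_mul (3 * Real.sqrt 3 / 8)).add hinv2).sub_const _
    have hxs : (Real.sqrt x) ^ 2 = x := Real.sq_sqrt hx0.le
    have heq : 3 * Real.sqrt 3 / 8 * (0 - -(1 / (2 * Real.sqrt x)) / (Real.sqrt x) ^ 2) + -(1) / (1 + x) ^ 2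
        = 3 * Real.sqrt 3 / 8 * (1 / (2 * x * Real.sqrt x)) - ((1 + x) ^ 2)⁻¹ := by
      rw [← hxs]
      field_simp
      rw [Real.sqrt_sq hs.le]
      ring
    rw [heq] at h
    exact h.hasDerivWithinAt
  · rw [hI]
    intro x hx
    have hx0 : (0:ℝ) < x := hx
    set s := Real.sqrt x with hsdef
    have hs : (0:ℝ) < s := Real.sqrt_pos.mpr hx0
    have hxs : s ^ 2 = x := Real.sq_sqrt hx0.le
    set r := Real.sqrt 3 with hrdef
    have hr : (0:ℝ) < r := Real.sqrt_pos.mpr (by norm_num)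
    have hr2 : r ^ 2 = 3 := Real.sq_sqrt (by norm_num)
    have key : 16 * (s ^ 2 * s) ≤ 3 * r * (1 + s ^ 2) ^ 2 := by
      nlinarith [sq_nonneg (s * r - 3), mul_nonneg (sq_nonneg (s * r - 3)) hr.le,
        mul_nonneg (mul_nonneg (sq_nonneg (s * r - 3)) hr.le) (sq_nonneg s),
        mul_nonneg (mul_nonneg (sq_nonneg (s * r - 3)) hr.le) hs.le,
        mul_pos hs hr, sq_nonneg (s - r), sq_nonneg (s + r)]
    rw [sub_nonneg, ← hxs]
    have e1 : 3 * r / 8 * (1 / (2 * s ^ 2 * s)) = 3 * r / (16 * (s ^ 2 * s)) := by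
      field_simp
      ring
    rw [e1, inv_eq_one_div, div_le_div_iff₀ (by positivity) (by positivity)]
    linarith [key]

lemma psi2_convex : ConvexOn ℝ (Set.Ioi (0:ℝ)) psi2 := by
  have hI : interior (Set.Ioi (0:ℝ)) = Set.Ioi 0 := interior_Ioi
  apply convexOn_of_hasDerivWithinAt2_nonneg (convex_Ioi 0)
    (f' := fun t => 1 / 4 * (Real.log t + 1) + (1 + t)⁻¹ - 3 / 4)
    (f'' := fun t => 1 / 4 * t⁻¹ - ((1 + t) ^ 2)⁻¹)
  · unfold psi2
    apply ContinuousOn.sub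
    apply ContinuousOn.sub
    apply ContinuousOn.add
    · exact (continuousOn_const.mul (continuousOn_id.mul (Real.continuousOn_log.mono
        (fun x hx => ne_of_gt hx))))
    · exact ContinuousOn.log (continuous_const.add continuous_id).continuousOn
        (fun x hx => by have : (0:ℝ) < x := hx; positivity)
    · exact continuousOn_const
    · exact continuousOn_const.mul (continuous_id.sub continuous_const).continuousOn
  · rw [hI]
    intro x hx
    have hx0 : (0:ℝ) < x := hx
    have h1x : (0:ℝ) < 1 + x := by linarith
    have hlog : HasDerivAt (fun t => Real.log (1 + t)) (1 / (1 + x)) x := by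
      have := ((hasDerivAt_id x).const_add 1).log h1x.ne'
      simpa using this
    have hxlog : HasDerivAt (fun t : ℝ => t * Real.log t) (Real.log x + 1) x := by
      have h := (hasDerivAt_id x).mul (Real.hasDerivAt_log hx0.ne')
      simp only [one_mul, id_eq] at h
      rw [mul_inv_cancel₀ hx0.ne'] at h
      exact h
    have h : HasDerivAt psi2
        (1 / 4 * (Real.log x + 1) + 1 / (1 + x) - 3 / 4 * 1) x := by
      unfold psi2
      exact (((hxlog.const_mul (1/4)).add hlog).sub_const (Real.log 2)).sub
        (((hasDerivAt_id x).sub_const 1).const_mul (3/4))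
    have heq : 1 / 4 * (Real.log x + 1) + 1 / (1 + x) - 3 / 4 * 1
        = 1 / 4 * (Real.log x + 1) + (1 + x)⁻¹ - 3 / 4 := by
      field_simp
    rw [heq] at h
    exact h.hasDerivWithinAt
  · rw [hI]
    intro x hx
    have hx0 : (0:ℝ) < x := hx
    have h1x : (0:ℝ) < 1 + x := by linarith
    have hinv2 : HasDerivAt (fun t : ℝ => (1 + t)⁻¹) (-(1) / (1 + x) ^ 2) x := by
      have := ((hasDerivAt_id x).const_add 1).inv h1x.ne'
      exact this
    have h : HasDerivAt (fun t => 1 / 4 * (Real.log t + 1) + (1 + t)⁻¹ - 3 / 4)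
        (1 / 4 * x⁻¹ + -(1) / (1 + x) ^ 2) x := by
      exact ((((Real.hasDerivAt_log hx0.ne').add_const 1).const_mul (1/4)).add hinv2).sub_const _
    have heq : 1 / 4 * x⁻¹ + -(1) / (1 + x) ^ 2 = 1 / 4 * x⁻¹ - ((1 + x) ^ 2)⁻¹ := by
      ring
    rw [heq] at h
    exact h.hasDerivWithinAt
  · rw [hI]
    intro x hx
    have hx0 : (0:ℝ) < x := hx
    have h1x : (0:ℝ) < 1 + x := by linarith
    rw [sub_nonneg, inv_eq_one_div, div_le_iff₀ (by positivity)]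
    have e1 : 1 / 4 * x⁻¹ * (1 + x) ^ 2 = (1 + x) ^ 2 / (4 * x) := by
      field_simp
    rw [e1, le_div_iff₀ (by positivity)]
    nlinarith [sq_nonneg (1 - x)]


lemma psi1_one : psi1 1 = 0 := by
  unfold psi1
  rw [Real.sqrt_one]
  norm_num

lemma psi2_one : psi2 1 = 0 := by
  unfold psi2
  norm_num

lemma term1 (a b : ℝ) (ha : 0 < a) (hb : 0 < b) :
    b * psi1 (a / b) = 3 * Real.sqrt 3 / 8 * (Real.sqrt a - Real.sqrt b) ^ 2
      - (a - b) / 2 - b * Real.log (2 * b / (b + a)) := by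
  have hsb : (0:ℝ) < Real.sqrt b := Real.sqrt_pos.mpr hb
  have hab : (0:ℝ) < b + a := by linarith
  have hsq2 : Real.sqrt (a / b) = Real.sqrt a * Real.sqrt b / b := by
    rw [Real.sqrt_div ha.le, div_eq_div_iff hsb.ne' hb.ne', mul_assoc,
      Real.mul_self_sqrt hb.le]
  have hexp : (Real.sqrt a - Real.sqrt b) ^ 2 = a - 2 * (Real.sqrt a * Real.sqrt b) + b := by
    rw [sub_sq, Real.sq_sqrt ha.le, Real.sq_sqrt hb.le]; ring
  have hlog1 : Real.log (1 + a / b) = Real.log (b + a) - Real.log b := by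
    rw [show 1 + a / b = (b + a) / b by field_simp, Real.log_div hab.ne' hb.ne']
  have hlog2 : Real.log (2 * b / (b + a)) = Real.log 2 + Real.log b - Real.log (b + a) := by
    rw [Real.log_div (by positivity) hab.ne', Real.log_mul (by norm_num) hb.ne']
  unfold psi1
  rw [hsq2, hexp, hlog1, hlog2]
  field_simp
  ring

lemma term2 (a b : ℝ) (ha : 0 < a) (hb : 0 < b) :
    b * psi2 (a / b) = 1 / 4 * (a * (Real.log a - Real.log b))
      - 3 / 4 * (a - b) - b * Real.log (2 * b / (b + a)) := by
  have hab : (0:ℝ) < b + a := by linarith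
  have hlog1 : Real.log (1 + a / b) = Real.log (b + a) - Real.log b := by
    rw [show 1 + a / b = (b + a) / b by field_simp, Real.log_div hab.ne' hb.ne']
  have hlog2 : Real.log (2 * b / (b + a)) = Real.log 2 + Real.log b - Real.log (b + a) := by
    rw [Real.log_div (by positivity) hab.ne', Real.log_mul (by norm_num) hb.ne']
  have hlog3 : Real.log (a / b) = Real.log a - Real.log b := Real.log_div ha.ne' hb.ne'
  unfold psi2
  rw [hlog1, hlog2, hlog3]
  field_simp
  ring


lemma jensen_nonneg {n : ℕ} (f : ℝ → ℝ) (hf : ConvexOn ℝ (Set.Ioi 0) f) (hf1 : f 1 = 0)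
    (p q : Fin n → ℝ) (hp : ∀ i, 0 < p i) (hq : ∀ i, 0 < q i)
    (hp1 : ∑ i, p i = 1) (hq1 : ∑ i, q i = 1) :
    0 ≤ ∑ i, q i * f (p i / q i) := by
  have h := hf.map_sum_le (t := Finset.univ) (w := q) (p := fun i => p i / q i)
    (fun i _ => (hq i).le) hq1 (fun i _ => div_pos (hp i) (hq i))
  simp only [smul_eq_mul] at h
  have hsum : ∑ i, q i * (p i / q i) = 1 := by
    rw [← hp1]
    refine Finset.sum_congr rfl (fun i _ => ?_)
    rw [mul_comm, div_mul_cancel₀ _ (hq i).ne']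
  rw [hsum, hf1] at h
  exact h

theorem stmt9 {n : ℕ} (hn : 2 ≤ n) (p q : Fin n → ℝ)
    (hp : ∀ i, 0 < p i) (hq : ∀ i, 0 < q i)
    (hp1 : ∑ i, p i = 1) (hq1 : ∑ i, q i = 1) :
    relJS q p ≤ (3 * Real.sqrt 3 / 4) * hell p q ∧
      relJS q p ≤ (1 / 4) * KL p q := by
  have h1 := jensen_nonneg psi1 psi1_convex psi1_one p q hp hq hp1 hq1
  have h2 := jensen_nonneg psi2 psi2_convex psi2_one p q hp hq hp1 hq1
  constructor
  · have e1 : ∑ i, q i * psi1 (p i / q i)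
        = 3 * Real.sqrt 3 / 8 * (∑ i, (Real.sqrt (p i) - Real.sqrt (q i)) ^ 2)
          - ((∑ i, p i) - ∑ i, q i) / 2 - relJS q p := by
      unfold relJS
      rw [show (∑ i, q i * psi1 (p i / q i))
          = ∑ i, (3 * Real.sqrt 3 / 8 * (Real.sqrt (p i) - Real.sqrt (q i)) ^ 2
            - (p i - q i) / 2 - q i * Real.log (2 * q i / (q i + p i)))
        from Finset.sum_congr rfl (fun i _ => term1 (p i) (q i) (hp i) (hq i))]
      rw [Finset.sum_sub_distrib, Finset.sum_sub_distrib, ← Finset.mul_sum,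
        ← Finset.sum_div, Finset.sum_sub_distrib]
    rw [e1, hp1, hq1] at h1
    have hh : (3 * Real.sqrt 3 / 4) * hell p q
        = 3 * Real.sqrt 3 / 8 * ∑ i, (Real.sqrt (p i) - Real.sqrt (q i)) ^ 2 := by
      unfold hell; ring
    rw [hh]
    linarith
  · have e2 : ∑ i, q i * psi2 (p i / q i)
        = 1 / 4 * KL p q - 3 / 4 * ((∑ i, p i) - ∑ i, q i) - relJS q p := by
      unfold relJS KL
      rw [show (∑ i, q i * psi2 (p i / q i))
          = ∑ i, (1 / 4 * (p i * Real.log (p i / q i))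
            - 3 / 4 * (p i - q i) - q i * Real.log (2 * q i / (q i + p i))) from
        Finset.sum_congr rfl (fun i _ => by
          rw [term2 (p i) (q i) (hp i) (hq i), Real.log_div (hp i).ne' (hq i).ne',
            mul_comm (p i) (Real.log (p i) - Real.log (q i)), ← mul_comm (p i)])]
      rw [Finset.sum_sub_distrib, Finset.sum_sub_distrib, ← Finset.mul_sum,
        ← Finset.mul_sum, Finset.sum_sub_distrib]
    rw [e2, hp1, hq1] at h2
    linarith
end

section
/- Let P, Q ∈ Γ_n and let r, R satisfy 0 < r ≤ p_i/q_i ≤ R < ∞ for all i. If s ≤ −1 then (1/(2r^s(r+1)))·Φ_s(P||Q) ≤ G(P||Q) ≤ (1/(2R^s(R+1)))·Φ_s(P||Q), and if s ≥ 0 then (1/(2R^s(R+1)))·Φ_s(P||Q) ≤ G(P||Q) ≤ (1/(2r^s(r+1)))·Φ_s(P||Q). -/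
open Real

noncomputable def phi (s x : ℝ) : ℝ :=
  if s = 0 then -Real.log x + x - 1
  else if s = 1 then x * Real.log x - x + 1
  else (x ^ s - 1 - s * (x - 1)) / (s * (s - 1))

noncomputable def phi' (s x : ℝ) : ℝ :=
  if s = 1 then Real.log x else (x ^ (s - 1) - 1) / (s - 1)

noncomputable def f0 (x : ℝ) : ℝ :=
  ((x + 1) / 2) * Real.log ((x + 1) / (2 * x)) + (x - 1) / 2

noncomputable def f0' (x : ℝ) : ℝ :=
  (1 / 2) * Real.log ((x + 1) / (2 * x)) + 1 / 2 - 1 / (2 * x)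

lemma phi_one (s : ℝ) : phi s 1 = 0 := by
  unfold phi
  split_ifs with h1 h2 <;> simp [Real.log_one, Real.one_rpow]

lemma phi'_one (s : ℝ) : phi' s 1 = 0 := by
  unfold phi'
  split_ifs with h1 <;> simp [Real.log_one, Real.one_rpow]

lemma f0_one : f0 1 = 0 := by
  unfold f0; norm_num

lemma f0'_one : f0' 1 = 0 := by
  unfold f0'; norm_num

lemma hasDerivAt_phi (s : ℝ) {x : ℝ} (hx : 0 < x) :
    HasDerivAt (phi s) (phi' s x) x := by
  unfold phi phi'
  rcases eq_or_ne s 0 with h0 | h0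
  · subst h0
    simp only [if_pos rfl, if_neg one_ne_zero, if_neg (by norm_num : (0:ℝ) ≠ 1), ↓reduceIte]
    have h : HasDerivAt (fun x : ℝ => -Real.log x + x - 1) (-x⁻¹ + 1) x := by
      exact (((Real.hasDerivAt_log hx.ne').neg.add (hasDerivAt_id x)).sub_const 1)
    convert h using 1
    rw [show (0:ℝ) - 1 = -1 by norm_num, Real.rpow_neg_one]
    rw [div_eq_iff (by norm_num : (-1:ℝ) ≠ 0)]
    field_simp
    ring
  rcases eq_or_ne s 1 with h1 | h1
  · subst h1
    simp only [if_neg one_ne_zero, if_pos rfl, ↓reduceIte]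
    have h : HasDerivAt (fun x : ℝ => x * Real.log x - x + 1)
        (1 * Real.log x + x * x⁻¹ - 1) x := by
      exact (((hasDerivAt_id x).mul (Real.hasDerivAt_log hx.ne')).sub (hasDerivAt_id x)).add_const 1
    convert h using 1
    field_simp
    ring
  · simp only [if_neg h0, if_neg h1]
    have h : HasDerivAt (fun x : ℝ => (x ^ s - 1 - s * (x - 1)) / (s * (s - 1)))
        ((s * x ^ (s - 1) - s * 1) / (s * (s - 1))) x := by
      have h2 : HasDerivAt (fun x : ℝ => x ^ s - 1 - s * (x - 1)) (s * x ^ (s - 1) - s * 1) x := by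
        exact ((Real.hasDerivAt_rpow_const (Or.inl hx.ne')).sub_const 1).sub
          (((hasDerivAt_id x).sub_const 1).const_mul s)
      exact h2.div_const _
    convert h using 1
    have hs : s ≠ 0 := h0
    have hs1 : s - 1 ≠ 0 := sub_ne_zero.mpr h1
    field_simp

lemma hasDerivAt_phi' (s : ℝ) {x : ℝ} (hx : 0 < x) :
    HasDerivAt (phi' s) (x ^ (s - 2)) x := by
  unfold phi'
  rcases eq_or_ne s 1 with h1 | h1
  · subst h1
    simp only [if_pos rfl, ↓reduceIte]
    convert Real.hasDerivAt_log hx.ne' using 1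
    rw [show (1:ℝ) - 2 = -1 by norm_num, Real.rpow_neg_one]
  · simp only [if_neg h1]
    have hs1 : s - 1 ≠ 0 := sub_ne_zero.mpr h1
    have h : HasDerivAt (fun x : ℝ => (x ^ (s - 1) - 1) / (s - 1))
        (((s - 1) * x ^ (s - 1 - 1)) / (s - 1)) x :=
      ((Real.hasDerivAt_rpow_const (Or.inl hx.ne')).sub_const 1).div_const _
    convert h using 1
    rw [show s - 1 - 1 = s - 2 by ring]
    field_simp

lemma hasDerivAt_f0 {x : ℝ} (hx : 0 < x) : HasDerivAt f0 (f0' x) x := by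
  unfold f0 f0'
  have hu : HasDerivAt (fun x : ℝ => (x + 1) / (2 * x))
      ((1 * (2 * x) - (x + 1) * 2) / (2 * x) ^ 2) x := by
    have h2 : HasDerivAt (fun x : ℝ => 2 * x) 2 x := by
      simpa using (hasDerivAt_id x).const_mul (2:ℝ)
    exact ((hasDerivAt_id x).add_const 1).div h2 (by positivity)
  have hune : (x + 1) / (2 * x) ≠ 0 := by positivity
  have hlog := hu.log hune
  have h1 : HasDerivAt (fun x : ℝ => ((x + 1) / 2) * Real.log ((x + 1) / (2 * x)) + (x - 1) / 2)
      ((1 / 2) * Real.log ((x + 1) / (2 * x)) +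
        ((x + 1) / 2) * (((1 * (2 * x) - (x + 1) * 2) / (2 * x) ^ 2) / ((x + 1) / (2 * x))) + 1 / 2) x := by
    exact ((((hasDerivAt_id x).add_const 1).div_const 2).mul hlog).add
      (((hasDerivAt_id x).sub_const 1).div_const 2)
  convert h1 using 1
  have hx1 : x + 1 ≠ 0 := by positivity
  field_simp
  ring

lemma hasDerivAt_f0' {x : ℝ} (hx : 0 < x) :
    HasDerivAt f0' (1 / (2 * x ^ 2 * (x + 1))) x := by
  unfold f0'
  have hu : HasDerivAt (fun x : ℝ => (x + 1) / (2 * x))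
      ((1 * (2 * x) - (x + 1) * 2) / (2 * x) ^ 2) x := by
    have h2 : HasDerivAt (fun x : ℝ => 2 * x) 2 x := by
      simpa using (hasDerivAt_id x).const_mul (2:ℝ)
    exact ((hasDerivAt_id x).add_const 1).div h2 (by positivity)
  have hune : (x + 1) / (2 * x) ≠ 0 := by positivity
  have hlog := hu.log hune
  have h2 : HasDerivAt (fun x : ℝ => 2 * x) 2 x := by
    simpa using (hasDerivAt_id x).const_mul (2:ℝ)
  have hinv : HasDerivAt (fun x : ℝ => 1 / (2 * x)) (-2 / (2 * x) ^ 2) x := by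
    have h3 := h2.inv (by positivity : 2 * x ≠ 0)
    simp only [one_div]
    exact h3
  have h1 : HasDerivAt (fun x : ℝ => (1 / 2) * Real.log ((x + 1) / (2 * x)) + 1 / 2 - 1 / (2 * x))
      ((1 / 2) * (((1 * (2 * x) - (x + 1) * 2) / (2 * x) ^ 2) / ((x + 1) / (2 * x)))
        - (-2 / (2 * x) ^ 2)) x := by
    exact ((hlog.const_mul (1/2)).add_const (1/2)).sub hinv
  convert h1 using 1
  have hx1 : x + 1 ≠ 0 := by positivity
  field_simp
  ring

lemma tangent_nonneg (F F' : ℝ → ℝ) (r R : ℝ) (hr : 0 < r) (hr1 : r ≤ 1) (hR1 : 1 ≤ R)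
    (hF : ∀ x ∈ Set.Icc r R, HasDerivAt F (F' x) x)
    (hF'd : ∀ x ∈ Set.Icc r R, ∃ d, HasDerivAt F' d x ∧ 0 ≤ d)
    (hF1 : F 1 = 0) (hF'1 : F' 1 = 0) :
    ∀ x ∈ Set.Icc r R, 0 ≤ F x := by
  have h1mem : (1:ℝ) ∈ Set.Icc r R := ⟨hr1, hR1⟩
  -- F' is monotone on Icc r R
  have hmono : MonotoneOn F' (Set.Icc r R) := by
    apply monotoneOn_of_deriv_nonneg (convex_Icc r R)
    · intro x hx
      obtain ⟨d, hd, _⟩ := hF'd x hx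
      exact hd.continuousAt.continuousWithinAt
    · intro x hx
      rw [interior_Icc] at hx
      obtain ⟨d, hd, _⟩ := hF'd x (Set.mem_Icc_of_Ioo hx)
      exact hd.differentiableAt.differentiableWithinAt
    · intro x hx
      rw [interior_Icc] at hx
      obtain ⟨d, hd, hd0⟩ := hF'd x (Set.mem_Icc_of_Ioo hx)
      rw [hd.deriv]; exact hd0
  -- F monotone on [1, R]
  have hsub1 : Set.Icc (1:ℝ) R ⊆ Set.Icc r R := Set.Icc_subset_Icc hr1 le_rfl
  have hsub2 : Set.Icc r (1:ℝ) ⊆ Set.Icc r R := Set.Icc_subset_Icc le_rfl hR1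
  have hFmono : MonotoneOn F (Set.Icc 1 R) := by
    apply monotoneOn_of_deriv_nonneg (convex_Icc 1 R)
    · intro x hx; exact (hF x (hsub1 hx)).continuousAt.continuousWithinAt
    · intro x hx
      rw [interior_Icc] at hx
      exact (hF x (hsub1 (Set.mem_Icc_of_Ioo hx))).differentiableAt.differentiableWithinAt
    · intro x hx
      rw [interior_Icc] at hx
      rw [(hF x (hsub1 (Set.mem_Icc_of_Ioo hx))).deriv]
      have := hmono h1mem (hsub1 (Set.mem_Icc_of_Ioo hx)) hx.1.le
      linarith [hF'1]
  have hFanti : AntitoneOn F (Set.Icc r 1) := by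
    apply antitoneOn_of_deriv_nonpos (convex_Icc r 1)
    · intro x hx; exact (hF x (hsub2 hx)).continuousAt.continuousWithinAt
    · intro x hx
      rw [interior_Icc] at hx
      exact (hF x (hsub2 (Set.mem_Icc_of_Ioo hx))).differentiableAt.differentiableWithinAt
    · intro x hx
      rw [interior_Icc] at hx
      rw [(hF x (hsub2 (Set.mem_Icc_of_Ioo hx))).deriv]
      have := hmono (hsub2 (Set.mem_Icc_of_Ioo hx)) h1mem hx.2.le
      linarith [hF'1]
  intro x hx
  rcases le_total x 1 with hx1 | hx1
  · have := hFanti ⟨hx.1, hx1⟩ ⟨hr1, le_rfl⟩ hx1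
    rw [hF1] at this; exact this
  · have := hFmono ⟨le_rfl, hR1⟩ ⟨hx1, hx.2⟩ hx1
    rw [hF1] at this; exact this
lemma rpow_sub_two_eq {x : ℝ} (hx : 0 < x) (s : ℝ) : x ^ (s - 2) = x ^ s / x ^ (2:ℕ) := by
  rw [show s - 2 = s + (-2) by ring, Real.rpow_add hx, Real.rpow_neg hx.le,
    show ((2:ℝ)) = ((2:ℕ):ℝ) by norm_num, Real.rpow_natCast]
  rw [div_eq_mul_inv]

lemma second_deriv_le {x C s : ℝ} (hx : 0 < x) (hC : 0 < C) (h : C ≤ x ^ s * (x + 1)) :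
    1 / (2 * x ^ 2 * (x + 1)) ≤ (1 / (2 * C)) * x ^ (s - 2) := by
  have hA : 0 < x ^ s := Real.rpow_pos_of_pos hx s
  rw [rpow_sub_two_eq hx s]
  have he : (1 / (2 * C)) * (x ^ s / x ^ (2:ℕ)) = x ^ s / (2 * C * x ^ (2:ℕ)) := by ring
  rw [he, div_le_div_iff₀ (by positivity) (by positivity)]
  nlinarith [sq_nonneg x, pow_pos hx 2]

lemma second_deriv_ge {x C s : ℝ} (hx : 0 < x) (hC : 0 < C) (h : x ^ s * (x + 1) ≤ C) :
    (1 / (2 * C)) * x ^ (s - 2) ≤ 1 / (2 * x ^ 2 * (x + 1)) := by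
  have hA : 0 < x ^ s := Real.rpow_pos_of_pos hx s
  rw [rpow_sub_two_eq hx s]
  have he : (1 / (2 * C)) * (x ^ s / x ^ (2:ℕ)) = x ^ s / (2 * C * x ^ (2:ℕ)) := by ring
  rw [he, div_le_div_iff₀ (by positivity) (by positivity)]
  nlinarith [pow_pos hx 2]

lemma key_le (s r R C : ℝ) (hr : 0 < r) (hr1 : r ≤ 1) (hR1 : 1 ≤ R) (hC : 0 < C)
    (hCle : ∀ t ∈ Set.Icc r R, C ≤ t ^ s * (t + 1)) :
    ∀ x ∈ Set.Icc r R, f0 x ≤ (1 / (2 * C)) * phi s x := by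
  have := tangent_nonneg (fun x => (1 / (2 * C)) * phi s x - f0 x)
    (fun x => (1 / (2 * C)) * phi' s x - f0' x) r R hr hr1 hR1
    (fun x hx => (((hasDerivAt_phi s (lt_of_lt_of_le hr hx.1)).const_mul _).sub
      (hasDerivAt_f0 (lt_of_lt_of_le hr hx.1))))
    (fun x hx => by
      have hxpos : 0 < x := lt_of_lt_of_le hr hx.1
      refine ⟨(1 / (2 * C)) * x ^ (s - 2) - 1 / (2 * x ^ 2 * (x + 1)),
        ((hasDerivAt_phi' s hxpos).const_mul _).sub (hasDerivAt_f0' hxpos), ?_⟩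
      have := second_deriv_le hxpos hC (hCle x hx)
      linarith)
    (by simp [phi_one, f0_one]) (by simp [phi'_one, f0'_one])
  intro x hx
  have := this x hx
  linarith

lemma key_ge (s r R C : ℝ) (hr : 0 < r) (hr1 : r ≤ 1) (hR1 : 1 ≤ R) (hC : 0 < C)
    (hCge : ∀ t ∈ Set.Icc r R, t ^ s * (t + 1) ≤ C) :
    ∀ x ∈ Set.Icc r R, (1 / (2 * C)) * phi s x ≤ f0 x := by
  have := tangent_nonneg (fun x => f0 x - (1 / (2 * C)) * phi s x)
    (fun x => f0' x - (1 / (2 * C)) * phi' s x) r R hr hr1 hR1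
    (fun x hx => ((hasDerivAt_f0 (lt_of_lt_of_le hr hx.1)).sub
      ((hasDerivAt_phi s (lt_of_lt_of_le hr hx.1)).const_mul _)))
    (fun x hx => by
      have hxpos : 0 < x := lt_of_lt_of_le hr hx.1
      refine ⟨1 / (2 * x ^ 2 * (x + 1)) - (1 / (2 * C)) * x ^ (s - 2),
        (hasDerivAt_f0' hxpos).sub ((hasDerivAt_phi' s hxpos).const_mul _), ?_⟩
      have := second_deriv_ge hxpos hC (hCge x hx)
      linarith)
    (by simp [phi_one, f0_one]) (by simp [phi'_one, f0'_one])
  intro x hx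
  have := this x hx
  linarith

lemma mono_fact_nonneg {s a b : ℝ} (hs : 0 ≤ s) (ha : 0 < a) (hab : a ≤ b) :
    a ^ s * (a + 1) ≤ b ^ s * (b + 1) := by
  have h1 : a ^ s ≤ b ^ s := Real.rpow_le_rpow ha.le hab hs
  have h2 : (0:ℝ) < a ^ s := Real.rpow_pos_of_pos ha s
  nlinarith

lemma mono_fact_le_neg_one {s a b : ℝ} (hs : s ≤ -1) (ha : 0 < a) (hab : a ≤ b) :
    b ^ s * (b + 1) ≤ a ^ s * (a + 1) := by
  have hb : 0 < b := lt_of_lt_of_le ha hab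
  have h1 : b ^ s ≤ a ^ s := Real.rpow_le_rpow_of_nonpos ha hab (by linarith)
  have h2 : b ^ (s + 1) ≤ a ^ (s + 1) := Real.rpow_le_rpow_of_nonpos ha hab (by linarith)
  have e1 : a ^ s * (a + 1) = a ^ (s + 1) + a ^ s := by
    rw [Real.rpow_add_one ha.ne']; ring
  have e2 : b ^ s * (b + 1) = b ^ (s + 1) + b ^ s := by
    rw [Real.rpow_add_one hb.ne']; ring
  rw [e1, e2]; linarith
lemma relAG_eq {n : ℕ} (p q : Fin n → ℝ) (hp : ∀ i, 0 < p i) (hq : ∀ i, 0 < q i)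
    (hp1 : ∑ i, p i = 1) (hq1 : ∑ i, q i = 1) :
    relAG p q = ∑ i, q i * f0 (p i / q i) := by
  have h1 : ∀ i, q i * f0 (p i / q i)
      = ((p i + q i) / 2) * Real.log ((p i + q i) / (2 * p i)) + (p i - q i) / 2 := by
    intro i
    have hpi := hp i; have hqi := hq i
    unfold f0
    have e2 : (p i / q i + 1) / (2 * (p i / q i)) = (p i + q i) / (2 * p i) := by
      field_simp
    rw [e2]
    field_simp
  rw [Finset.sum_congr rfl (fun i _ => h1 i), Finset.sum_add_distrib]
  have h2 : ∑ i, (p i - q i) / 2 = 0 := by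
    rw [← Finset.sum_div, Finset.sum_sub_distrib, hp1, hq1]; norm_num
  rw [h2]
  unfold relAG
  ring

lemma Phi_eq {n : ℕ} (s : ℝ) (p q : Fin n → ℝ) (hp : ∀ i, 0 < p i) (hq : ∀ i, 0 < q i)
    (hp1 : ∑ i, p i = 1) (hq1 : ∑ i, q i = 1) :
    Phi s p q = ∑ i, q i * phi s (p i / q i) := by
  unfold Phi phi
  rcases eq_or_ne s 0 with h0 | h0
  · subst h0
    simp only [eq_self_iff_true, if_true]
    have h1 : ∀ i, q i * (-Real.log (p i / q i) + p i / q i - 1)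
        = q i * Real.log (q i / p i) + (p i - q i) := by
      intro i
      have hpi := hp i; have hqi := hq i
      have e : Real.log (q i / p i) = -Real.log (p i / q i) := by
        rw [← Real.log_inv, inv_div]
      rw [e]
      field_simp
      ring
    rw [Finset.sum_congr rfl (fun i _ => h1 i), Finset.sum_add_distrib,
      Finset.sum_sub_distrib, hp1, hq1]
    ring
  rcases eq_or_ne s 1 with h1 | h1
  · subst h1
    simp only [if_neg one_ne_zero, eq_self_iff_true, if_true]
    have h2 : ∀ i, q i * (p i / q i * Real.log (p i / q i) - p i / q i + 1)
        = p i * Real.log (p i / q i) - (p i - q i) := by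
      intro i
      have hpi := hp i; have hqi := hq i
      field_simp
      ring
    rw [Finset.sum_congr rfl (fun i _ => h2 i), Finset.sum_sub_distrib,
      Finset.sum_sub_distrib, hp1, hq1]
    ring
  · simp only [if_neg h0, if_neg h1]
    have key : ∀ i, q i * (p i / q i) ^ s = p i ^ s * q i ^ (1 - s) := by
      intro i
      have hpi := hp i; have hqi := hq i
      have hqs : (0:ℝ) < q i ^ s := Real.rpow_pos_of_pos hqi s
      rw [Real.div_rpow hpi.le hqi.le, Real.rpow_sub hqi, Real.rpow_one]
      field_simp
    have h4 : ∀ i, q i * (((p i / q i) ^ s - 1 - s * (p i / q i - 1)) / (s * (s - 1)))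
        = (s * (s - 1))⁻¹ * (p i ^ s * q i ^ (1 - s) - q i - s * (p i - q i)) := by
      intro i
      have hqi := hq i
      have e : (p i / q i) ^ s = p i ^ s * q i ^ (1 - s) / q i := by
        rw [← key i]; field_simp
      rw [e]
      have hss : s * (s - 1) ≠ 0 := by
        exact mul_ne_zero h0 (sub_ne_zero.mpr h1)
      field_simp
    rw [Finset.sum_congr rfl (fun i _ => h4 i), ← Finset.mul_sum]
    congr 1
    rw [Finset.sum_sub_distrib, Finset.sum_sub_distrib, hq1, ← Finset.mul_sum,
      Finset.sum_sub_distrib, hp1, hq1]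
    ring
theorem stmt10 {n : ℕ} (hn : 2 ≤ n) (p q : Fin n → ℝ)
    (hp : ∀ i, 0 < p i) (hq : ∀ i, 0 < q i)
    (hp1 : ∑ i, p i = 1) (hq1 : ∑ i, q i = 1)
    (r R : ℝ) (hr : 0 < r)
    (hlow : ∀ i, r ≤ p i / q i) (hupp : ∀ i, p i / q i ≤ R) (s : ℝ) :
    (s ≤ -1 →
      (1 / (2 * r ^ s * (r + 1))) * Phi s p q ≤ relAG p q ∧
        relAG p q ≤ (1 / (2 * R ^ s * (R + 1))) * Phi s p q) ∧
    (0 ≤ s →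
      (1 / (2 * R ^ s * (R + 1))) * Phi s p q ≤ relAG p q ∧
        relAG p q ≤ (1 / (2 * r ^ s * (r + 1))) * Phi s p q) := by
  have hmem : ∀ i, p i / q i ∈ Set.Icc r R := fun i => ⟨hlow i, hupp i⟩
  have hqp : ∀ i, q i * (p i / q i) = p i := fun i => by
    field_simp
    rw [mul_comm, mul_div_assoc, div_self (hq i).ne', mul_one]
  have hr1 : r ≤ 1 := by
    have h : ∑ i, q i * r ≤ ∑ i, p i := Finset.sum_le_sum (fun i _ => by
      have h2 := mul_le_mul_of_nonneg_left (hlow i) (hq i).le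
      rwa [hqp i] at h2)
    rw [← Finset.sum_mul, hq1, one_mul, hp1] at h
    exact h
  have hR1 : 1 ≤ R := by
    have h : ∑ i, p i ≤ ∑ i, q i * R := Finset.sum_le_sum (fun i _ => by
      have h2 := mul_le_mul_of_nonneg_left (hupp i) (hq i).le
      rwa [hqp i] at h2)
    rw [← Finset.sum_mul, hq1, one_mul, hp1] at h
    exact h
  have hR0 : (0:ℝ) < R := by linarith
  have hCr : 0 < r ^ s * (r + 1) := by positivity
  have hCR : 0 < R ^ s * (R + 1) := by positivity
  have hAG : relAG p q = ∑ i, q i * f0 (p i / q i) := relAG_eq p q hp hq hp1 hq1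
  have hPhi : Phi s p q = ∑ i, q i * phi s (p i / q i) := Phi_eq s p q hp hq hp1 hq1
  have hconst : ∀ C : ℝ, (1 / (2 * C)) * Phi s p q
      = ∑ i, q i * ((1 / (2 * C)) * phi s (p i / q i)) := by
    intro C
    rw [hPhi, Finset.mul_sum]
    exact Finset.sum_congr rfl (fun i _ => by ring)
  constructor
  · intro hs
    have hub : ∀ x ∈ Set.Icc r R, f0 x ≤ (1 / (2 * (R ^ s * (R + 1)))) * phi s x :=
      key_le s r R _ hr hr1 hR1 hCR (fun t ht =>
        mono_fact_le_neg_one hs (lt_of_lt_of_le hr ht.1) ht.2)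
    have hlb : ∀ x ∈ Set.Icc r R, (1 / (2 * (r ^ s * (r + 1)))) * phi s x ≤ f0 x :=
      key_ge s r R _ hr hr1 hR1 hCr (fun t ht =>
        mono_fact_le_neg_one hs hr ht.1)
    constructor
    · rw [show 2 * r ^ s * (r + 1) = 2 * (r ^ s * (r + 1)) by ring, hconst, hAG]
      exact Finset.sum_le_sum (fun i _ =>
        mul_le_mul_of_nonneg_left (hlb _ (hmem i)) (hq i).le)
    · rw [show 2 * R ^ s * (R + 1) = 2 * (R ^ s * (R + 1)) by ring, hconst, hAG]
      exact Finset.sum_le_sum (fun i _ =>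
        mul_le_mul_of_nonneg_left (hub _ (hmem i)) (hq i).le)
  · intro hs
    have hub : ∀ x ∈ Set.Icc r R, f0 x ≤ (1 / (2 * (r ^ s * (r + 1)))) * phi s x :=
      key_le s r R _ hr hr1 hR1 hCr (fun t ht =>
        mono_fact_nonneg hs hr ht.1)
    have hlb : ∀ x ∈ Set.Icc r R, (1 / (2 * (R ^ s * (R + 1)))) * phi s x ≤ f0 x :=
      key_ge s r R _ hr hr1 hR1 hCR (fun t ht =>
        mono_fact_nonneg hs (lt_of_lt_of_le hr ht.1) ht.2)
    constructor
    · rw [show 2 * R ^ s * (R + 1) = 2 * (R ^ s * (R + 1)) by ring, hconst, hAG]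
      exact Finset.sum_le_sum (fun i _ =>
        mul_le_mul_of_nonneg_left (hlb _ (hmem i)) (hq i).le)
    · rw [show 2 * r ^ s * (r + 1) = 2 * (r ^ s * (r + 1)) by ring, hconst, hAG]
      exact Finset.sum_le_sum (fun i _ =>
        mul_le_mul_of_nonneg_left (hub _ (hmem i)) (hq i).le)
end
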